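/- arXiv:1802.04038 — 3 statements merged into one kernel-verified Lean document; each statement's English description precedes it below -/
import Mathlib

section
/- Let μ be any probability measure on [0,1] ⊂ ℝ and let (X_k)_{k≥1} be i.i.d. random variables with law μ. Then for every n ≥ 1, E[W_1(μ̂_n, μ)] ≤ (1/(2(√2 − 1))) · 1/√n. -/
open MeasureTheory ProbabilityTheory
open scoped ENNReal

noncomputable section

/-- The empirical measure `μ̂_n = (1/n) ∑_{k=1}^n δ_{X_k}` of a process. -/
def empMeasure {Ω E : Type*} [MeasurableSpace Ω] [MeasurableSpace E]
    (X : ℕ → Ω → E) (n : ℕ) (ω : Ω) : Measure E :=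
  (n : ℝ≥0∞)⁻¹ • ∑ k ∈ Finset.Icc 1 n, Measure.dirac (X k ω)

/-- The 1-Wasserstein distance, in duality with 1-Lipschitz functions. -/
def W1 {E : Type*} [MeasurableSpace E] [PseudoMetricSpace E] (ν₀ ν₁ : Measure E) : ℝ :=
  ⨆ f : {f : E → ℝ // LipschitzWith 1 f}, |∫ x, f.1 x ∂ν₀ - ∫ x, f.1 x ∂ν₁|

namespace EmpW1

open Filter

/-! ### Dyadic combinatorics -/

/-- index of the dyadic cell of level `j` containing `x`, clamped to `[0, 2^j - 1]`. -/
def idx (j : ℕ) (x : ℝ) : ℕ := min ⌊(2:ℝ)^j * x⌋₊ (2^j - 1)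

/-- midpoint of the `i`-th dyadic cell of level `j`. -/
def midp (j i : ℕ) : ℝ := ((i:ℝ) + 1/2) / 2^j

/-- the `i`-th dyadic cell of level `j` (as a subset of `[0,1]`). -/
def dyA (j i : ℕ) : Set ℝ := Set.Icc 0 1 ∩ idx j ⁻¹' {i}

lemma measurable_idx (j : ℕ) : Measurable (idx j) :=
  (Nat.measurable_floor.comp (measurable_const_mul _)).min measurable_const

lemma measurableSet_dyA (j i : ℕ) : MeasurableSet (dyA j i) :=
  measurableSet_Icc.inter ((measurable_idx j) (measurableSet_singleton i))

lemma idx_lt (j : ℕ) (x : ℝ) : idx j x < 2^j := by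
  have h : 1 ≤ 2^j := Nat.one_le_two_pow
  simp only [idx]
  omega

lemma idx_zero (x : ℝ) : idx 0 x = 0 := by simp [idx]

lemma two_pow_pos (j : ℕ) : (0:ℝ) < 2^j := by positivity

/-- `x` lies in the cell with its index. -/
lemma idx_bounds {j : ℕ} {x : ℝ} (hx : x ∈ Set.Icc (0:ℝ) 1) :
    (idx j x : ℝ) / 2^j ≤ x ∧ x ≤ ((idx j x : ℝ) + 1) / 2^j := by
  obtain ⟨hx0, hx1⟩ := hx
  have h2 : (0:ℝ) < 2^j := two_pow_pos j
  rcases lt_or_eq_of_le hx1 with hlt | heq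
  · have hnn : 0 ≤ (2:ℝ)^j * x := by positivity
    have hfl : ⌊(2:ℝ)^j * x⌋₊ < 2^j := by
      rw [Nat.floor_lt hnn]
      calc (2:ℝ)^j * x < 2^j * 1 := by nlinarith
        _ = ((2^j : ℕ) : ℝ) := by push_cast; ring
    have hidx : idx j x = ⌊(2:ℝ)^j * x⌋₊ := by
      have : 1 ≤ 2^j := Nat.one_le_two_pow
      simp only [idx]; omega
    rw [hidx]
    constructor
    · rw [div_le_iff₀ h2]
      calc (⌊(2:ℝ)^j * x⌋₊ : ℝ) ≤ 2^j * x := Nat.floor_le hnn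
        _ = x * 2^j := by ring
    · rw [le_div_iff₀ h2]
      have := Nat.lt_floor_add_one ((2:ℝ)^j * x)
      nlinarith
  · subst heq
    have hfl : ⌊(2:ℝ)^j * 1⌋₊ = 2^j := by
      rw [mul_one]
      rw [show ((2:ℝ)^j) = ((2^j : ℕ) : ℝ) by push_cast; ring]
      exact Nat.floor_natCast _
    have hidx : idx j 1 = 2^j - 1 := by
      simp only [idx, hfl]; omega
    rw [hidx]
    have hc : ((2^j - 1 : ℕ) : ℝ) = 2^j - 1 := by
      have : 1 ≤ 2^j := Nat.one_le_two_pow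
      push_cast [this]; ring
    rw [hc]
    constructor
    · rw [div_le_iff₀ h2]; nlinarith
    · rw [le_div_iff₀ h2]; nlinarith

lemma abs_sub_midp {j : ℕ} {x : ℝ} (hx : x ∈ Set.Icc (0:ℝ) 1) :
    |x - midp j (idx j x)| ≤ 1 / 2^(j+1) := by
  obtain ⟨h1, h2⟩ := idx_bounds (j := j) hx
  have h2j : (0:ℝ) < 2^j := two_pow_pos j
  rw [div_le_iff₀ h2j] at h1
  rw [le_div_iff₀ h2j] at h2
  have key : |x * 2^j - ((idx j x : ℝ) + 1/2)| ≤ 1/2 := by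
    rw [abs_le]; constructor <;> nlinarith
  have heq : x - midp j (idx j x) = (x * 2^j - ((idx j x : ℝ) + 1/2)) / 2^j := by
    rw [midp]; field_simp
  rw [heq, abs_div, abs_of_pos h2j, div_le_div_iff₀ h2j (two_pow_pos (j+1))]
  calc |x * 2^j - ((idx j x : ℝ) + 1/2)| * 2^(j+1)
      = |x * 2^j - ((idx j x : ℝ) + 1/2)| * (2 * 2^j) := by ring
    _ ≤ (1/2) * (2 * 2^j) := by
        apply mul_le_mul_of_nonneg_right key; positivity
    _ = 1 * 2^j := by ring

lemma idx_succ_div {j : ℕ} {x : ℝ} (hx : 0 ≤ x) : idx j x = idx (j+1) x / 2 := by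
  have hfl : ⌊(2:ℝ)^j * x⌋₊ = ⌊(2:ℝ)^(j+1) * x⌋₊ / 2 := by
    have : (2:ℝ)^j * x = ((2:ℝ)^(j+1) * x) / (2:ℕ) := by push_cast; ring
    rw [this, Nat.floor_div_natCast]
  have h1 : (1:ℕ) ≤ 2^j := Nat.one_le_two_pow
  have h2 : (2:ℕ)^(j+1) = 2 * 2^j := by ring
  simp only [idx, hfl]
  omega

lemma abs_midp_succ (j i : ℕ) : |midp (j+1) i - midp j (i/2)| ≤ 1 / 2^(j+2) := by
  have hmod := Nat.div_add_mod i 2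
  have hcast : (i:ℝ) = 2 * ((i/2 : ℕ) : ℝ) + ((i % 2 : ℕ) : ℝ) := by exact_mod_cast hmod.symm
  have heq : midp (j+1) i - midp j (i/2) = (((i % 2 : ℕ) : ℝ) - 1/2) / 2^(j+1) := by
    simp only [midp, hcast]
    have h1 : (2:ℝ)^(j+1) ≠ 0 := by positivity
    have h2 : (2:ℝ)^j ≠ 0 := by positivity
    field_simp
    ring
  rw [heq]
  have hm : i % 2 = 0 ∨ i % 2 = 1 := Nat.mod_two_eq_zero_or_one i
  have habs : |((i % 2 : ℕ) : ℝ) - 1/2| ≤ 1/2 := by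
    rcases hm with h | h <;> rw [h] <;> norm_num [abs_le]
  rw [abs_div, abs_of_pos (two_pow_pos (j+1))]
  rw [div_le_div_iff₀ (two_pow_pos (j+1)) (two_pow_pos (j+2))]
  calc |((i % 2 : ℕ) : ℝ) - 1/2| * 2^(j+2) ≤ (1/2) * 2^(j+2) := by
        apply mul_le_mul_of_nonneg_right habs; positivity
    _ = 1 * 2^(j+1) := by ring

lemma mem_dyA_iff {j i : ℕ} {x : ℝ} (hx : x ∈ Set.Icc (0:ℝ) 1) :
    x ∈ dyA j i ↔ idx j x = i := by
  simp [dyA, hx]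

lemma dyA_disjoint {j : ℕ} {i i' : ℕ} (h : i ≠ i') : Disjoint (dyA j i) (dyA j i') := by
  apply Set.disjoint_left.mpr
  rintro x ⟨_, hx⟩ ⟨_, hx'⟩
  exact h (hx.symm.trans hx')

lemma midp_mem {j i : ℕ} (h : i < 2^j) : midp j i ∈ Set.Icc (0:ℝ) 1 := by
  have h2j : (0:ℝ) < 2^j := two_pow_pos j
  have hc : (i:ℝ) ≤ (2:ℝ)^j - 1 := by
    have : (i:ℝ) + 1 ≤ ((2^j : ℕ) : ℝ) := by exact_mod_cast h
    push_cast at this ⊢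
    linarith
  constructor
  · rw [midp]; positivity
  · rw [midp, div_le_one h2j]; linarith

/-! ### Dyadic approximations of a Lipschitz function -/

/-- the dyadic piecewise-midpoint approximation of `f` at level `j`. -/
def dg (f : ℝ → ℝ) (j : ℕ) (x : ℝ) : ℝ := f (midp j (idx j x))

/-- increment coefficients. -/
def dc (f : ℝ → ℝ) (j i : ℕ) : ℝ := f (midp (j+1) i) - f (midp j (i/2))

lemma lip_abs {f : ℝ → ℝ} (hf : LipschitzWith 1 f) (x y : ℝ) : |f x - f y| ≤ |x - y| := by
  have := hf.dist_le_mul x y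
  rwa [Real.dist_eq, Real.dist_eq, NNReal.coe_one, one_mul] at this

lemma dg_zero (f : ℝ → ℝ) (x : ℝ) : dg f 0 x = f (midp 0 0) := by
  rw [dg, idx_zero]

lemma abs_f_sub_dg {f : ℝ → ℝ} (hf : LipschitzWith 1 f) {x : ℝ}
    (hx : x ∈ Set.Icc (0:ℝ) 1) (J : ℕ) : |f x - dg f J x| ≤ 1/2^(J+1) :=
  (lip_abs hf _ _).trans (abs_sub_midp hx)

lemma abs_dc {f : ℝ → ℝ} (hf : LipschitzWith 1 f) (j i : ℕ) : |dc f j i| ≤ 1/2^(j+2) :=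
  (lip_abs hf _ _).trans (abs_midp_succ j i)

lemma dg_step {f : ℝ → ℝ} {x : ℝ} (hx : x ∈ Set.Icc (0:ℝ) 1) (j : ℕ) :
    dg f (j+1) x - dg f j x
      = ∑ i ∈ Finset.range (2^(j+1)), (dyA (j+1) i).indicator (fun _ => dc f j i) x := by
  have hi0 : idx (j+1) x ∈ Finset.range (2^(j+1)) := Finset.mem_range.mpr (idx_lt _ _)
  rw [Finset.sum_eq_single_of_mem (idx (j+1) x) hi0]
  · rw [Set.indicator_of_mem ((mem_dyA_iff hx).mpr rfl)]
    rw [dg, dg, dc, ← idx_succ_div hx.1]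
  · intro b _ hb
    apply Set.indicator_of_notMem
    rw [mem_dyA_iff hx]
    exact fun h => hb h.symm

lemma dg_bound {f : ℝ → ℝ} (hf : LipschitzWith 1 f) (j : ℕ) (x : ℝ) :
    |dg f j x| ≤ |f 0| + 1 := by
  have hm := midp_mem (idx_lt j x)
  calc |dg f j x| = |f (midp j (idx j x))| := rfl
    _ ≤ |f (midp j (idx j x)) - f 0| + |f 0| := by
        have := abs_add_le (f (midp j (idx j x)) - f 0) (f 0); simpa using this
    _ ≤ |midp j (idx j x) - 0| + |f 0| := by
        have := lip_abs hf (midp j (idx j x)) 0; linarith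
    _ ≤ |f 0| + 1 := by
        rw [sub_zero, abs_of_nonneg hm.1]; linarith [hm.2]

lemma f_bound {f : ℝ → ℝ} (hf : LipschitzWith 1 f) {x : ℝ} (hx : x ∈ Set.Icc (0:ℝ) 1) :
    |f x| ≤ |f 0| + 1 := by
  calc |f x| ≤ |f x - f 0| + |f 0| := by
        have := abs_add_le (f x - f 0) (f 0); simpa using this
    _ ≤ |x - 0| + |f 0| := by have := lip_abs hf x 0; linarith
    _ ≤ |f 0| + 1 := by rw [sub_zero, abs_of_nonneg hx.1]; linarith [hx.2]

lemma measurable_dg {f : ℝ → ℝ} (hf : LipschitzWith 1 f) (j : ℕ) : Measurable (dg f j) := by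
  have h1 : Measurable fun x => midp j (idx j x) :=
    (measurable_from_nat (f := midp j)).comp (measurable_idx j)
  exact hf.continuous.measurable.comp h1

/-! ### Generic integration facts -/

lemma integrable_of_bounded {Ω : Type*} [MeasurableSpace Ω] {P : Measure Ω} [IsFiniteMeasure P]
    {g : Ω → ℝ} (hg : AEStronglyMeasurable g P) {C : ℝ} (hb : ∀ ω, |g ω| ≤ C) :
    Integrable g P :=
  (integrable_const C).mono' hg (Filter.Eventually.of_forall (by simpa using hb))

lemma abs_integral_sub_le_sqrt_variance {Ω : Type*} [MeasurableSpace Ω] (P : Measure Ω)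
    [IsProbabilityMeasure P] {W : Ω → ℝ} (hW : MemLp W 2 P) :
    ∫ ω, |W ω - ∫ ω', W ω' ∂P| ∂P ≤ Real.sqrt (variance W P) := by
  set c := ∫ ω', W ω' ∂P with hc
  have hZ : MemLp (fun ω => W ω - c) 2 P := hW.sub (memLp_const c)
  have h2 : (ENNReal.ofReal (2:ℝ)) = 2 := by
    rw [ENNReal.ofReal_ofNat]
  have hone : MemLp (fun _ : Ω => (1:ℝ)) (ENNReal.ofReal 2) P := by
    rw [h2]; exact memLp_const 1
  have hZ2 : MemLp (fun ω => W ω - c) (ENNReal.ofReal 2) P := by rw [h2]; exact hZ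
  have hpq : Real.HolderConjugate 2 2 := Real.HolderConjugate.two_two
  have hcs := integral_mul_norm_le_Lp_mul_Lq hpq hZ2 hone
  simp only [norm_one, mul_one, Real.norm_eq_abs, Real.one_rpow, one_pow, integral_const,
    measure_univ, probReal_univ, smul_eq_mul, one_mul, Real.rpow_two, sq_abs] at hcs
  have hv : variance W P = ∫ ω, (W ω - c)^2 ∂P := by
    rw [variance_eq_integral hW.aemeasurable]
  refine hcs.trans (le_of_eq ?_)
  rw [← Real.sqrt_eq_rpow, hv]

lemma indicator_one_sq (A : Set ℝ) (x : ℝ) :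
    (A.indicator (fun _ => (1:ℝ)) x)^2 = A.indicator (fun _ => (1:ℝ)) x := by
  by_cases h : x ∈ A <;> simp [h]

lemma abs_indicator_one_le (A : Set ℝ) (x : ℝ) :
    |A.indicator (fun _ => (1:ℝ)) x| ≤ 1 := by
  by_cases h : x ∈ A <;> simp [h]

lemma indicator_one_nonneg (A : Set ℝ) (x : ℝ) :
    0 ≤ A.indicator (fun _ => (1:ℝ)) x := by
  by_cases h : x ∈ A <;> simp [h]

lemma indicator_const_eq_mul (A : Set ℝ) (c : ℝ) (x : ℝ) :
    A.indicator (fun _ => c) x = c * A.indicator (fun _ => (1:ℝ)) x := by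
  by_cases h : x ∈ A <;> simp [h]

/-! ### The expected deviation on a cell -/

lemma expected_abs_dev {Ω : Type*} [MeasurableSpace Ω] (P : Measure Ω) [IsProbabilityMeasure P]
    (μ : Measure ℝ) [IsProbabilityMeasure μ]
    (X : ℕ → Ω → ℝ) (hmeas : ∀ k, Measurable (X k))
    (hindep : iIndepFun X P)
    (hlaw : ∀ k, Measure.map (X k) P = μ)
    (n : ℕ) (hn : 1 ≤ n) {A : Set ℝ} (hA : MeasurableSet A) :
    ∫ ω, |(∑ k ∈ Finset.Icc 1 n, A.indicator (fun _ => (1:ℝ)) (X k ω)) / n - (μ A).toReal| ∂P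
      ≤ Real.sqrt ((μ A).toReal) / Real.sqrt n := by
  have hn0 : (0:ℝ) < n := by exact_mod_cast hn
  set p := (μ A).toReal with hp
  have hp0 : 0 ≤ p := ENNReal.toReal_nonneg
  set Y : ℕ → Ω → ℝ := fun k ω => A.indicator (fun _ => (1:ℝ)) (X k ω) with hY
  have hgmeas : Measurable (A.indicator (fun _ => (1:ℝ))) := measurable_const.indicator hA
  have hYmeas : ∀ k, Measurable (Y k) := fun k => hgmeas.comp (hmeas k)
  have hYL2 : ∀ k, MemLp (Y k) 2 P := fun k =>
    MemLp.of_bound (hYmeas k).aestronglyMeasurable 1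
      (Filter.Eventually.of_forall fun ω => by simpa using abs_indicator_one_le A (X k ω))
  have hEY : ∀ k, ∫ ω, Y k ω ∂P = p := by
    intro k
    have : ∫ ω, Y k ω ∂P = ∫ x, A.indicator (fun _ => (1:ℝ)) x ∂(Measure.map (X k) P) :=
      (integral_map (hmeas k).aemeasurable hgmeas.aestronglyMeasurable).symm
    rw [this, hlaw k]
    exact integral_indicator_one (μ := μ) hA
  have hEY2 : ∀ k, ∫ ω, (Y k ω)^2 ∂P = p := by
    intro k
    simp only [hY, indicator_one_sq]
    exact hEY k
  have hvarY : ∀ k, variance (Y k) P ≤ p := by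
    intro k
    rw [variance_eq_sub (hYL2 k)]
    have h1 : ∫ ω, (Y k ^ 2) ω ∂P = p := by
      simpa [Pi.pow_apply] using hEY2 k
    rw [h1, hEY k]
    nlinarith [sq_nonneg p]
  have hpair : (↑(Finset.Icc 1 n) : Set ℕ).Pairwise fun i j => IndepFun (Y i) (Y j) P := by
    intro i _ j _ hij
    exact (hindep.indepFun hij).comp hgmeas hgmeas
  have hvarsum : variance (∑ k ∈ Finset.Icc 1 n, Y k) P ≤ n * p := by
    rw [IndepFun.variance_sum (fun k _ => hYL2 k) hpair]
    calc ∑ k ∈ Finset.Icc 1 n, variance (Y k) P ≤ ∑ k ∈ Finset.Icc 1 n, p :=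
          Finset.sum_le_sum fun k _ => hvarY k
      _ = n * p := by rw [Finset.sum_const, Nat.card_Icc]; simp [nsmul_eq_mul]
  set W : Ω → ℝ := fun ω => (∑ k ∈ Finset.Icc 1 n, Y k ω) / n with hW
  have hWL2 : MemLp W 2 P := by
    apply MemLp.of_bound
      (by
        apply Measurable.aestronglyMeasurable
        apply Measurable.div_const
        exact Finset.measurable_sum _ fun k _ => hYmeas k) 1
    refine Filter.Eventually.of_forall fun ω => ?_
    rw [Real.norm_eq_abs, hW, abs_div, abs_of_pos hn0, div_le_one hn0]
    calc |∑ k ∈ Finset.Icc 1 n, Y k ω| ≤ ∑ k ∈ Finset.Icc 1 n, |Y k ω| :=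
          Finset.abs_sum_le_sum_abs _ _
      _ ≤ ∑ k ∈ Finset.Icc 1 n, 1 := Finset.sum_le_sum fun k _ => abs_indicator_one_le A (X k ω)
      _ = n := by rw [Finset.sum_const, Nat.card_Icc]; simp
  have hEW : ∫ ω, W ω ∂P = p := by
    simp only [hW]
    rw [integral_div, integral_finset_sum _ fun k _ => (hYL2 k).integrable one_le_two]
    rw [Finset.sum_congr rfl fun k _ => hEY k, Finset.sum_const, Nat.card_Icc]
    simp [nsmul_eq_mul]
    field_simp
  have hvarW : variance W P ≤ p / n := by
    have heq : W = fun ω => (1/(n:ℝ)) * (∑ k ∈ Finset.Icc 1 n, Y k) ω := by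
      funext ω; simp [hW, Finset.sum_apply]; ring
    rw [heq, variance_const_mul]
    calc (1/(n:ℝ))^2 * variance (∑ k ∈ Finset.Icc 1 n, Y k) P
        ≤ (1/(n:ℝ))^2 * (n * p) := by
          apply mul_le_mul_of_nonneg_left hvarsum; positivity
      _ = p / n := by field_simp
  calc ∫ ω, |(∑ k ∈ Finset.Icc 1 n, A.indicator (fun _ => (1:ℝ)) (X k ω)) / n - p| ∂P
      = ∫ ω, |W ω - ∫ ω', W ω' ∂P| ∂P := by rw [hEW]
    _ ≤ Real.sqrt (variance W P) := abs_integral_sub_le_sqrt_variance P hWL2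
    _ ≤ Real.sqrt (p / n) := Real.sqrt_le_sqrt hvarW
    _ = Real.sqrt p / Real.sqrt n := Real.sqrt_div hp0 n

/-! ### The pointwise chaining bound -/

lemma pointwise_bound (μ : Measure ℝ) [IsProbabilityMeasure μ] (hμ : μ (Set.Icc (0:ℝ) 1) = 1)
    (n : ℕ) (hn : 1 ≤ n) (x : ℕ → ℝ) (hx : ∀ k ∈ Finset.Icc 1 n, x k ∈ Set.Icc (0:ℝ) 1)
    {f : ℝ → ℝ} (hf : LipschitzWith 1 f) (J : ℕ) :
    |(∑ k ∈ Finset.Icc 1 n, f (x k)) / n - ∫ t, f t ∂μ|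
      ≤ (∑ j ∈ Finset.range J, (1/2^(j+2)) *
          ∑ i ∈ Finset.range (2^(j+1)),
            |(∑ k ∈ Finset.Icc 1 n, (dyA (j+1) i).indicator (fun _ => (1:ℝ)) (x k)) / n
              - (μ (dyA (j+1) i)).toReal|) + 1/2^J := by
  have hn0 : (0:ℝ) < n := by exact_mod_cast hn
  have hae : ∀ᵐ t ∂μ, t ∈ Set.Icc (0:ℝ) 1 := by
    rw [ae_iff]
    have : {t : ℝ | ¬ t ∈ Set.Icc (0:ℝ) 1} = (Set.Icc (0:ℝ) 1)ᶜ := rfl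
    rw [this, measure_compl measurableSet_Icc (by simp), hμ, measure_univ, tsub_self]
  -- integrability
  have hfint : Integrable f μ :=
    (integrable_const (|f 0| + 1)).mono' hf.continuous.aestronglyMeasurable
      (hae.mono fun t ht => by simpa using f_bound hf ht)
  have hgint : ∀ j, Integrable (dg f j) μ := fun j =>
    integrable_of_bounded (measurable_dg hf j).aestronglyMeasurable (dg_bound hf j)
  -- the numbers
  set Sf : ℝ := (∑ k ∈ Finset.Icc 1 n, f (x k)) / n with hSf
  set If : ℝ := ∫ t, f t ∂μ with hIf
  set sg : ℕ → ℝ := fun j => (∑ k ∈ Finset.Icc 1 n, dg f j (x k)) / n with hsg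
  set ag : ℕ → ℝ := fun j => ∫ t, dg f j t ∂μ with hag
  set u : ℕ → ℝ := fun j => sg j - ag j with hu
  set dev : ℕ → ℕ → ℝ := fun j i =>
    (∑ k ∈ Finset.Icc 1 n, (dyA j i).indicator (fun _ => (1:ℝ)) (x k)) / n
      - (μ (dyA j i)).toReal with hdev
  -- u 0 = 0
  have hu0 : u 0 = 0 := by
    have h1 : sg 0 = f (midp 0 0) := by
      simp only [hsg]
      rw [Finset.sum_congr rfl fun k _ => dg_zero f (x k), Finset.sum_const, Nat.card_Icc, Nat.add_sub_cancel]
      simp only [nsmul_eq_mul]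
      field_simp
    have h2 : ag 0 = f (midp 0 0) := by
      simp only [hag]
      rw [integral_congr_ae (Filter.Eventually.of_forall fun t => dg_zero f t)]
      simp
    simp [hu, h1, h2]
  -- step identity
  have hstep : ∀ j, u (j+1) - u j
      = ∑ i ∈ Finset.range (2^(j+1)), dc f j i * dev (j+1) i := by
    intro j
    have hs : sg (j+1) - sg j = ∑ i ∈ Finset.range (2^(j+1)),
        dc f j i * ((∑ k ∈ Finset.Icc 1 n,
          (dyA (j+1) i).indicator (fun _ => (1:ℝ)) (x k)) / n) := by
      simp only [hsg]
      rw [div_sub_div_same, ← Finset.sum_sub_distrib]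
      rw [Finset.sum_congr rfl fun k hk => dg_step (hx k hk) j]
      rw [Finset.sum_comm]
      rw [Finset.sum_div]
      refine Finset.sum_congr rfl fun i _ => ?_
      rw [Finset.sum_congr rfl fun k _ => indicator_const_eq_mul (dyA (j+1) i) (dc f j i) (x k)]
      rw [← Finset.mul_sum, mul_div_assoc]
    have hindint : ∀ i : ℕ, Integrable ((dyA (j+1) i).indicator (fun _ => dc f j i)) μ := by
      intro i
      apply integrable_of_bounded
        ((measurable_const.indicator (measurableSet_dyA (j+1) i)).aestronglyMeasurable)
        (C := |dc f j i|)
      intro t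
      by_cases h : t ∈ dyA (j+1) i <;> simp [h]
    have ha : ag (j+1) - ag j = ∑ i ∈ Finset.range (2^(j+1)),
        dc f j i * (μ (dyA (j+1) i)).toReal := by
      simp only [hag]
      rw [← integral_sub (hgint (j+1)) (hgint j)]
      rw [integral_congr_ae (hae.mono fun t ht => dg_step ht j)]
      rw [integral_finset_sum _ fun i _ => hindint i]
      refine Finset.sum_congr rfl fun i _ => ?_
      rw [integral_indicator_const _ (measurableSet_dyA (j+1) i), smul_eq_mul, mul_comm]; rfl
    simp only [hu, hdev]
    rw [show sg (j+1) - ag (j+1) - (sg j - ag j) = (sg (j+1) - sg j) - (ag (j+1) - ag j) by ring]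
    rw [hs, ha, ← Finset.sum_sub_distrib]
    exact Finset.sum_congr rfl fun i _ => by ring
  -- telescoping
  have htel : u J = ∑ j ∈ Finset.range J, (u (j+1) - u j) := by
    rw [Finset.sum_range_sub u J, hu0, sub_zero]
  -- remainder bounds
  have hrem1 : |Sf - sg J| ≤ 1/2^(J+1) := by
    simp only [hSf, hsg]
    rw [div_sub_div_same, abs_div, abs_of_pos hn0, div_le_iff₀ hn0]
    rw [← Finset.sum_sub_distrib]
    calc |∑ k ∈ Finset.Icc 1 n, (f (x k) - dg f J (x k))|
        ≤ ∑ k ∈ Finset.Icc 1 n, |f (x k) - dg f J (x k)| := Finset.abs_sum_le_sum_abs _ _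
      _ ≤ ∑ k ∈ Finset.Icc 1 n, 1/2^(J+1) :=
          Finset.sum_le_sum fun k hk => abs_f_sub_dg hf (hx k hk) J
      _ = n * (1/2^(J+1)) := by rw [Finset.sum_const, Nat.card_Icc]; simp [nsmul_eq_mul]
      _ = 1/2^(J+1) * n := by ring
  have hrem2 : |If - ag J| ≤ 1/2^(J+1) := by
    simp only [hIf, hag]
    rw [← integral_sub hfint (hgint J)]
    have := norm_integral_le_of_norm_le_const (μ := μ) (C := 1/2^(J+1))
      (f := fun t => f t - dg f J t) (hae.mono fun t ht => by
        rw [Real.norm_eq_abs]; exact abs_f_sub_dg hf ht J)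
    rw [probReal_univ, mul_one, Real.norm_eq_abs] at this
    exact this
  -- assemble
  have hdecomp : Sf - If = (Sf - sg J) - (If - ag J) + u J := by simp [hu]; ring
  calc |Sf - If| ≤ |Sf - sg J| + |If - ag J| + |u J| := by
        rw [hdecomp]
        calc |(Sf - sg J) - (If - ag J) + u J| ≤ |(Sf - sg J) - (If - ag J)| + |u J| :=
              abs_add_le _ _
          _ ≤ |Sf - sg J| + |If - ag J| + |u J| := by
              have := abs_sub (Sf - sg J) (If - ag J)
              linarith [abs_sub_abs_le_abs_sub (Sf - sg J) (If - ag J),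
                abs_sub_le (Sf - sg J) 0 (If - ag J)]
    _ ≤ (∑ j ∈ Finset.range J, (1/2^(j+2)) *
          ∑ i ∈ Finset.range (2^(j+1)), |dev (j+1) i|) + 1/2^J := by
        have hJbound : |u J| ≤ ∑ j ∈ Finset.range J, (1/2^(j+2)) *
            ∑ i ∈ Finset.range (2^(j+1)), |dev (j+1) i| := by
          rw [htel]
          calc |∑ j ∈ Finset.range J, (u (j+1) - u j)|
              ≤ ∑ j ∈ Finset.range J, |u (j+1) - u j| := Finset.abs_sum_le_sum_abs _ _
            _ ≤ ∑ j ∈ Finset.range J, (1/2^(j+2)) *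
                ∑ i ∈ Finset.range (2^(j+1)), |dev (j+1) i| := by
                refine Finset.sum_le_sum fun j _ => ?_
                rw [hstep j, Finset.mul_sum]
                calc |∑ i ∈ Finset.range (2^(j+1)), dc f j i * dev (j+1) i|
                    ≤ ∑ i ∈ Finset.range (2^(j+1)), |dc f j i * dev (j+1) i| :=
                      Finset.abs_sum_le_sum_abs _ _
                  _ ≤ ∑ i ∈ Finset.range (2^(j+1)), (1/2^(j+2)) * |dev (j+1) i| := by
                      refine Finset.sum_le_sum fun i _ => ?_
                      rw [abs_mul]
                      exact mul_le_mul_of_nonneg_right (abs_dc hf j i) (abs_nonneg _)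
        have h2J : 1/2^(J+1) + 1/2^(J+1) = (1:ℝ)/2^J := by
          rw [← add_div]
          rw [show (2:ℝ)^(J+1) = 2 * 2^J by ring]
          field_simp
          norm_num
        linarith

/-! ### Integration of the empirical measure -/

lemma integral_empMeasure {Ω : Type*} [MeasurableSpace Ω] (X : ℕ → Ω → ℝ) (n : ℕ) (hn : 1 ≤ n)
    (ω : Ω) {f : ℝ → ℝ} (hf : StronglyMeasurable f) :
    ∫ t, f t ∂(empMeasure X n ω) = (∑ k ∈ Finset.Icc 1 n, f (X k ω)) / n := by
  have hint : ∀ k ∈ Finset.Icc 1 n, Integrable f (Measure.dirac (X k ω)) := by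
    intro k _
    refine ⟨hf.aestronglyMeasurable, ?_⟩
    rw [HasFiniteIntegral, lintegral_dirac]
    exact ENNReal.coe_lt_top
  rw [empMeasure, integral_smul_measure, integral_finset_sum_measure hint]
  rw [Finset.sum_congr rfl fun k _ => integral_dirac f (X k ω)]
  have hn0 : (n:ℝ) ≠ 0 := by positivity
  rw [ENNReal.toReal_inv, ENNReal.toReal_natCast, smul_eq_mul]
  field_simp

/-! ### Geometric sums -/

lemma sqrt_two_pow (m : ℕ) : Real.sqrt (2^m) = (Real.sqrt 2)^m := by
  have h : ((Real.sqrt 2)^m)^2 = 2^m := by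
    rw [← pow_mul, mul_comm, pow_mul, Real.sq_sqrt (by norm_num : (0:ℝ) ≤ 2)]
  rw [← h, Real.sqrt_sq (pow_nonneg (Real.sqrt_nonneg 2) m)]

lemma one_lt_sqrt_two : 1 < Real.sqrt 2 := by
  have : Real.sqrt 1 < Real.sqrt 2 := Real.sqrt_lt_sqrt (by norm_num) (by norm_num)
  simpa using this

lemma geom_bound (J : ℕ) :
    ∑ j ∈ Finset.range J, (1/2^(j+2)) * Real.sqrt (2^(j+1))
      ≤ 1 / (2 * (Real.sqrt 2 - 1)) := by
  set q := Real.sqrt 2 with hqdef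
  have hq2 : q^2 = 2 := Real.sq_sqrt (by norm_num)
  have hq1 : 1 < q := one_lt_sqrt_two
  have hq0 : 0 < q := lt_trans one_pos hq1
  have hterm : ∀ j : ℕ, (1/2^(j+2) : ℝ) * Real.sqrt (2^(j+1)) = (1/q)^3 * (1/q)^j := by
    intro j
    have h2pow : (2:ℝ)^(j+2) = q^(2*j+4) := by
      rw [← hq2, ← pow_mul]
      ring_nf
    rw [sqrt_two_pow, ← hqdef, h2pow, ← pow_add, div_pow, one_pow]
    rw [div_mul_eq_mul_div, one_mul]
    rw [div_eq_div_iff (by positivity) (by positivity), one_mul, ← pow_add]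
    congr 1
    omega
  rw [Finset.sum_congr rfl fun j _ => hterm j, ← Finset.mul_sum]
  have hr0 : (0:ℝ) ≤ 1/q := by positivity
  have hr1 : (1:ℝ)/q < 1 := by rw [div_lt_one hq0]; exact hq1
  have hgeo : ∑ j ∈ Finset.range J, (1/q)^j ≤ 1/(1 - 1/q) := by
    have hne : (1:ℝ)/q ≠ 1 := ne_of_lt hr1
    have hpos : (0:ℝ) < 1 - 1/q := by linarith
    rw [geom_sum_eq hne J,
      show (1/q)^J - 1 = -(1 - (1/q)^J) by ring,
      show (1:ℝ)/q - 1 = -(1 - 1/q) by ring, neg_div_neg_eq]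
    have hJ0 : (0:ℝ) ≤ (1/q)^J := by positivity
    gcongr <;> linarith
  calc (1/q)^3 * ∑ j ∈ Finset.range J, (1/q)^j
      ≤ (1/q)^3 * (1/(1 - 1/q)) := by
        apply mul_le_mul_of_nonneg_left hgeo; positivity
    _ = 1 / (2 * (q - 1)) := by
        have hq3 : q^3 = 2*q := by
          rw [pow_succ, hq2]
        rw [div_pow, one_pow, div_mul_div_comm, one_mul]
        congr 1
        have hqne : q ≠ 0 := ne_of_gt hq0
        field_simp
        linear_combination (q - 1) * hq2

end EmpW1

/-- For `μ` a probability measure on `[0,1] ⊆ ℝ` and `(X_k)` i.i.d. of law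
`μ`, for every `n ≥ 1`, `E[W₁(μ̂_n, μ)] ≤ (1/(2(√2 − 1))) · 1/√n`. -/
theorem empirical_W1_dim_one
    {Ω : Type*} [MeasurableSpace Ω] (P : Measure Ω) [IsProbabilityMeasure P]
    (μ : Measure ℝ) [IsProbabilityMeasure μ] (hμ : μ (Set.Icc (0:ℝ) 1) = 1)
    (X : ℕ → Ω → ℝ) (hmeas : ∀ k, Measurable (X k))
    (hindep : iIndepFun X P)
    (hlaw : ∀ k, Measure.map (X k) P = μ)
    (n : ℕ) (hn : 1 ≤ n) :
    ∫ ω, W1 (empMeasure X n ω) μ ∂P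
      ≤ (1 / (2 * (Real.sqrt 2 - 1))) * (1 / Real.sqrt n) := by
  classical
  have hn0 : (0:ℝ) < n := by exact_mod_cast hn
  have hsqrt2 : 1 < Real.sqrt 2 := EmpW1.one_lt_sqrt_two
  have hC0 : 0 ≤ (1 / (2 * (Real.sqrt 2 - 1)) : ℝ) := by
    apply le_of_lt; apply div_pos one_pos; nlinarith
  have hRHS0 : 0 ≤ (1 / (2 * (Real.sqrt 2 - 1))) * (1 / Real.sqrt n) := by
    apply mul_nonneg hC0; positivity
  -- deviations
  set dev : ℕ → ℕ → Ω → ℝ := fun j i ω =>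
    (∑ k ∈ Finset.Icc 1 n, (EmpW1.dyA j i).indicator (fun _ => (1:ℝ)) (X k ω)) / n
      - (μ (EmpW1.dyA j i)).toReal with hdevdef
  set M : ℕ → Ω → ℝ := fun J ω => ∑ j ∈ Finset.range J, (1/2^(j+2)) *
    ∑ i ∈ Finset.range (2^(j+1)), |dev (j+1) i ω| with hMdef
  -- a.e. all points in [0,1]
  have hX01 : ∀ k, ∀ᵐ ω ∂P, X k ω ∈ Set.Icc (0:ℝ) 1 := by
    intro k
    rw [ae_iff]
    have heq : {ω | ¬ X k ω ∈ Set.Icc (0:ℝ) 1} = X k ⁻¹' (Set.Icc (0:ℝ) 1)ᶜ := rfl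
    rw [heq, ← Measure.map_apply (hmeas k) measurableSet_Icc.compl, hlaw k,
      measure_compl measurableSet_Icc (by simp), hμ, measure_univ, tsub_self]
  have hG : ∀ᵐ ω ∂P, ∀ k ∈ Finset.Icc 1 n, X k ω ∈ Set.Icc (0:ℝ) 1 := by
    rw [Filter.eventually_all_finset]
    exact fun k _ => hX01 k
  -- pointwise bound
  have hW1le : ∀ J : ℕ, ∀ᵐ ω ∂P, W1 (empMeasure X n ω) μ ≤ M J ω + 1/2^J := by
    intro J
    filter_upwards [hG] with ω hω
    have hM0 : 0 ≤ M J ω := by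
      apply Finset.sum_nonneg
      intro j _
      apply mul_nonneg (by positivity)
      exact Finset.sum_nonneg fun i _ => abs_nonneg _
    rw [W1]
    refine Real.iSup_le (fun g => ?_) (by positivity)
    rw [EmpW1.integral_empMeasure X n hn ω g.2.continuous.stronglyMeasurable]
    exact EmpW1.pointwise_bound μ hμ n hn (fun k => X k ω) hω g.2 J
  -- measurability and integrability of deviations
  have hdevmeas : ∀ j i, Measurable (dev j i) := by
    intro j i
    apply Measurable.sub _ measurable_const
    apply Measurable.div_const
    exact Finset.measurable_sum _ fun k _ =>
      (measurable_const.indicator (EmpW1.measurableSet_dyA j i)).comp (hmeas k)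
  have hdevbd : ∀ j i ω, |dev j i ω| ≤ 2 := by
    intro j i ω
    have h1 : |(∑ k ∈ Finset.Icc 1 n,
        (EmpW1.dyA j i).indicator (fun _ => (1:ℝ)) (X k ω)) / n| ≤ 1 := by
      rw [abs_div, abs_of_pos hn0, div_le_one hn0]
      calc |∑ k ∈ Finset.Icc 1 n, (EmpW1.dyA j i).indicator (fun _ => (1:ℝ)) (X k ω)|
          ≤ ∑ k ∈ Finset.Icc 1 n, |(EmpW1.dyA j i).indicator (fun _ => (1:ℝ)) (X k ω)| :=
            Finset.abs_sum_le_sum_abs _ _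
        _ ≤ ∑ k ∈ Finset.Icc 1 n, 1 :=
            Finset.sum_le_sum fun k _ => EmpW1.abs_indicator_one_le _ _
        _ = n := by rw [Finset.sum_const, Nat.card_Icc]; simp
    have h2 : (μ (EmpW1.dyA j i)).toReal ≤ 1 := by
      have := prob_le_one (μ := μ) (s := EmpW1.dyA j i)
      exact ENNReal.toReal_le_of_le_ofReal one_pos.le (by simpa using this)
    have h3 : 0 ≤ (μ (EmpW1.dyA j i)).toReal := ENNReal.toReal_nonneg
    have h1' := abs_le.mp h1
    simp only [hdevdef]
    rw [abs_sub_le_iff]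
    constructor <;> linarith
  have hdevint : ∀ j i, Integrable (dev j i) P := fun j i =>
    EmpW1.integrable_of_bounded (hdevmeas j i).aestronglyMeasurable (hdevbd j i)
  have hSint : ∀ m : ℕ, Integrable (fun ω => ∑ i ∈ Finset.range (2^m), |dev m i ω|) P :=
    fun m => integrable_finset_sum _ fun i _ => (hdevint m i).abs
  have hMint : ∀ J, Integrable (M J) P := by
    intro J
    simp only [hMdef]
    exact integrable_finset_sum _ fun j _ => (hSint (j+1)).const_mul _
  -- expected deviations on one level
  have hES : ∀ m : ℕ, ∫ ω, (∑ i ∈ Finset.range (2^m), |dev m i ω|) ∂P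
      ≤ Real.sqrt (2^m) / Real.sqrt n := by
    intro m
    rw [integral_finset_sum _ fun i _ => (hdevint m i).abs]
    have hstep : ∀ i, ∫ ω, |dev m i ω| ∂P
        ≤ Real.sqrt ((μ (EmpW1.dyA m i)).toReal) / Real.sqrt n := fun i =>
      EmpW1.expected_abs_dev P μ X hmeas hindep hlaw n hn (EmpW1.measurableSet_dyA m i)
    have hkey : ∑ i ∈ Finset.range (2^m), Real.sqrt ((μ (EmpW1.dyA m i)).toReal)
        ≤ Real.sqrt (2^m) := by
      have hsum1 : ∑ i ∈ Finset.range (2^m), (μ (EmpW1.dyA m i)).toReal ≤ 1 := by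
        have hd : (↑(Finset.range (2^m)) : Set ℕ).PairwiseDisjoint (EmpW1.dyA m) :=
          fun i _ j _ hij => EmpW1.dyA_disjoint hij
        have hle : ∑ i ∈ Finset.range (2^m), μ (EmpW1.dyA m i) ≤ 1 := by
          rw [← measure_biUnion_finset hd fun i _ => EmpW1.measurableSet_dyA m i]
          exact prob_le_one
        have hne : ∀ i ∈ Finset.range (2^m), μ (EmpW1.dyA m i) ≠ ∞ :=
          fun i _ => measure_ne_top μ _
        rw [← ENNReal.toReal_sum hne]
        exact ENNReal.toReal_le_of_le_ofReal one_pos.le (by simpa using hle)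
      have hcs : (∑ i ∈ Finset.range (2^m), Real.sqrt ((μ (EmpW1.dyA m i)).toReal))^2
          ≤ (2^m : ℝ) * ∑ i ∈ Finset.range (2^m), (μ (EmpW1.dyA m i)).toReal := by
        have := sq_sum_le_card_mul_sum_sq
          (s := Finset.range (2^m)) (f := fun i => Real.sqrt ((μ (EmpW1.dyA m i)).toReal))
        rw [Finset.card_range] at this
        calc (∑ i ∈ Finset.range (2^m), Real.sqrt ((μ (EmpW1.dyA m i)).toReal))^2
            ≤ ((2^m : ℕ) : ℝ) * ∑ i ∈ Finset.range (2^m),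
                (Real.sqrt ((μ (EmpW1.dyA m i)).toReal))^2 := this
          _ = (2^m : ℝ) * ∑ i ∈ Finset.range (2^m), (μ (EmpW1.dyA m i)).toReal := by
              push_cast
              congr 1
              exact Finset.sum_congr rfl fun i _ => Real.sq_sqrt ENNReal.toReal_nonneg
      rw [Real.le_sqrt (Finset.sum_nonneg fun i _ => Real.sqrt_nonneg _) (by positivity)]
      calc (∑ i ∈ Finset.range (2^m), Real.sqrt ((μ (EmpW1.dyA m i)).toReal))^2
          ≤ (2^m : ℝ) * ∑ i ∈ Finset.range (2^m), (μ (EmpW1.dyA m i)).toReal := hcs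
        _ ≤ (2^m : ℝ) * 1 := by
            apply mul_le_mul_of_nonneg_left hsum1; positivity
        _ = 2^m := by ring
    calc ∑ i ∈ Finset.range (2^m), ∫ ω, |dev m i ω| ∂P
        ≤ ∑ i ∈ Finset.range (2^m), Real.sqrt ((μ (EmpW1.dyA m i)).toReal) / Real.sqrt n :=
          Finset.sum_le_sum fun i _ => hstep i
      _ = (∑ i ∈ Finset.range (2^m), Real.sqrt ((μ (EmpW1.dyA m i)).toReal)) / Real.sqrt n := by
          rw [Finset.sum_div]
      _ ≤ Real.sqrt (2^m) / Real.sqrt n := by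
          gcongr
  -- expectation of the majorant
  have hEM : ∀ J, ∫ ω, M J ω ∂P ≤ (1 / (2 * (Real.sqrt 2 - 1))) * (1 / Real.sqrt n) := by
    intro J
    have h1 : ∫ ω, M J ω ∂P = ∑ j ∈ Finset.range J, (1/2^(j+2)) *
        ∫ ω, (∑ i ∈ Finset.range (2^(j+1)), |dev (j+1) i ω|) ∂P := by
      simp only [hMdef]
      rw [integral_finset_sum _ fun j _ => (hSint (j+1)).const_mul _]
      exact Finset.sum_congr rfl fun j _ => integral_const_mul _ _
    rw [h1]
    calc ∑ j ∈ Finset.range J, (1/2^(j+2)) *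
          ∫ ω, (∑ i ∈ Finset.range (2^(j+1)), |dev (j+1) i ω|) ∂P
        ≤ ∑ j ∈ Finset.range J, (1/2^(j+2)) * (Real.sqrt (2^(j+1)) / Real.sqrt n) := by
          refine Finset.sum_le_sum fun j _ => ?_
          exact mul_le_mul_of_nonneg_left (hES (j+1)) (by positivity)
      _ = (∑ j ∈ Finset.range J, (1/2^(j+2)) * Real.sqrt (2^(j+1))) * (1 / Real.sqrt n) := by
          rw [Finset.sum_mul]
          exact Finset.sum_congr rfl fun j _ => by ring
      _ ≤ (1 / (2 * (Real.sqrt 2 - 1))) * (1 / Real.sqrt n) := by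
          apply mul_le_mul_of_nonneg_right (EmpW1.geom_bound J)
          positivity
  -- conclusion
  by_cases hint : Integrable (fun ω => W1 (empMeasure X n ω) μ) P
  · refine le_of_forall_pos_le_add fun ε hε => ?_
    obtain ⟨J, hJ⟩ := exists_pow_lt_of_lt_one hε (by norm_num : (1:ℝ)/2 < 1)
    have h12 : ((1:ℝ)/2)^J = 1/2^J := by rw [div_pow, one_pow]
    calc ∫ ω, W1 (empMeasure X n ω) μ ∂P
        ≤ ∫ ω, (M J ω + 1/2^J) ∂P :=
          integral_mono_ae hint ((hMint J).add (integrable_const _)) (hW1le J)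
      _ = ∫ ω, M J ω ∂P + 1/2^J := by
          rw [integral_add (hMint J) (integrable_const _), integral_const, probReal_univ]
          simp
      _ ≤ (1 / (2 * (Real.sqrt 2 - 1))) * (1 / Real.sqrt n) + 1/2^J := by
          linarith [hEM J]
      _ ≤ (1 / (2 * (Real.sqrt 2 - 1))) * (1 / Real.sqrt n) + ε := by
          rw [← h12]; linarith [hJ]
  · rw [integral_undef hint]
    exact hRHS0

end
end

section
/- Let d ≥ 1, q ∈ (0,1] with d < 2q, let μ be any probability measure on [0,1]^d and let (X_k)_{k≥1} be i.i.d. random variables with law μ. Then for every n ≥ 1, E[W_{q,∞}(μ̂_n, μ)] ≤ (2^{d/2 − 2q}/(1 − 2^{d/2 − q})) · 1/√n. -/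
open MeasureTheory ProbabilityTheory
open scoped ENNReal

noncomputable section

/-- The supremum distance `‖x − y‖_∞ = max_i |x_i − y_i|` on `ℝ^d`. -/
def supDist {d : ℕ} (x y : EuclideanSpace ℝ (Fin d)) : ℝ := ⨆ i, |x i - y i|

/-- The `q`-Hölder class for the supremum norm. -/
def HolClassSup (d : ℕ) (q : ℝ) : Set (EuclideanSpace ℝ (Fin d) → ℝ) :=
  {f | ∀ x y, |f x - f y| ≤ supDist x y ^ q}

/-- The distance `W_{q,∞}`, in duality with functions `f` with
`|f(x) − f(y)| ≤ ‖x − y‖_∞^q`. -/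
def Wqinf {d : ℕ} (q : ℝ) (ν₀ ν₁ : Measure (EuclideanSpace ℝ (Fin d))) : ℝ :=
  ⨆ f : HolClassSup d q, |∫ x, f.1 x ∂ν₀ - ∫ x, f.1 x ∂ν₁|

def unitCube (d : ℕ) : Set (EuclideanSpace ℝ (Fin d)) :=
  {x | ∀ i, x i ∈ Set.Icc (0:ℝ) 1}

namespace EmpWAux

abbrev E1 := EuclideanSpace ℝ (Fin 1)
def idx (l : ℕ) (t : ℝ) : ℕ := min ⌊t * 2 ^ l⌋₊ (2 ^ l - 1)
def ctr (l j : ℕ) : ℝ := ((j : ℝ) + 1 / 2) / 2 ^ l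
def pt (t : ℝ) : E1 := WithLp.toLp 2 (fun _ => t)
def cell (l j : ℕ) : Set E1 := {x | idx l (x 0) = j}

lemma idx_lt (l : ℕ) (t : ℝ) : idx l t < 2 ^ l :=
  lt_of_le_of_lt (min_le_right _ _) (Nat.sub_lt (Nat.two_pow_pos l) one_pos)

lemma idx_zero (t : ℝ) : idx 0 t = 0 := by simp [idx]

lemma idx_succ_div (l : ℕ) (t : ℝ) : idx (l + 1) t / 2 = idx l t := by
  unfold idx
  have h1 : ⌊t * 2 ^ (l + 1)⌋₊ / 2 = ⌊t * 2 ^ l⌋₊ := by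
    rw [← Nat.floor_div_natCast]
    congr 1
    rw [pow_succ]
    push_cast
    ring
  have h2 : (2 ^ (l + 1) - 1) / 2 = 2 ^ l - 1 := by
    have : 2 ^ (l + 1) = 2 * 2 ^ l := by ring
    omega
  have hpow : 2 ^ (l + 1) = 2 * 2 ^ l := by ring
  omega

lemma ctr_dist (l j : ℕ) : |ctr (l + 1) j - ctr l (j / 2)| ≤ 1 / 2 ^ (l + 2) := by
  rcases Nat.even_or_odd j with ⟨m, rfl⟩ | ⟨m, rfl⟩
  · have hj : (m + m) / 2 = m := by omega
    rw [hj]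
    have h : ctr (l + 1) (m + m) - ctr l m = -(1 / 2 ^ (l + 2)) := by
      unfold ctr; push_cast; field_simp; ring
    rw [h, abs_neg, abs_of_nonneg (by positivity)]
  · have hj : (2 * m + 1) / 2 = m := by omega
    rw [hj]
    have h : ctr (l + 1) (2 * m + 1) - ctr l m = 1 / 2 ^ (l + 2) := by
      unfold ctr; push_cast; field_simp; ring
    rw [h, abs_of_nonneg (by positivity)]

lemma idx_bounds (l : ℕ) {t : ℝ} (ht : t ∈ Set.Icc (0:ℝ) 1) :
    (idx l t : ℝ) ≤ t * 2 ^ l ∧ t * 2 ^ l ≤ idx l t + 1 := by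
  have h0 : (0:ℝ) ≤ t * 2 ^ l := mul_nonneg ht.1 (by positivity)
  rcases lt_or_eq_of_le ht.2 with h1 | h1
  · have hfl : ⌊t * 2 ^ l⌋₊ < 2 ^ l := by
      rw [Nat.floor_lt h0]
      calc t * 2 ^ l < 1 * 2 ^ l := by
            have := pow_pos (by norm_num : (0:ℝ) < 2) l
            nlinarith
        _ = ((2 ^ l : ℕ) : ℝ) := by push_cast; ring
    have hidx : idx l t = ⌊t * 2 ^ l⌋₊ := min_eq_left (by omega)
    rw [hidx]
    exact ⟨Nat.floor_le h0, (Nat.lt_floor_add_one _).le⟩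
  · subst h1
    have hfl : ⌊(1:ℝ) * 2 ^ l⌋₊ = 2 ^ l := by
      rw [one_mul]
      rw [show ((2:ℝ) ^ l) = ((2 ^ l : ℕ) : ℝ) by push_cast; ring]
      exact Nat.floor_natCast _
    have hidx : idx l 1 = 2 ^ l - 1 := by
      unfold idx; omega
    have hcast : ((idx l 1 : ℕ) : ℝ) = 2 ^ l - 1 := by
      rw [hidx]
      push_cast [Nat.one_le_two_pow]
      ring
    rw [hcast]
    constructor <;> linarith

lemma abs_sub_ctr (l : ℕ) {t : ℝ} (ht : t ∈ Set.Icc (0:ℝ) 1) :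
    |t - ctr l (idx l t)| ≤ 1 / 2 ^ (l + 1) := by
  obtain ⟨h1, h2⟩ := idx_bounds l ht
  have hp : (0:ℝ) < 2 ^ l := by positivity
  have hp2 : (2:ℝ) ^ (l + 1) = 2 ^ l * 2 := by ring
  rw [abs_le]
  unfold ctr
  constructor
  · rw [neg_le, ← sub_nonneg]
    have : ((idx l t : ℝ) + 1 / 2) / 2 ^ l - t ≤ 1 / 2 ^ (l + 1) := by
      rw [div_sub' (ne_of_gt hp), div_le_div_iff₀ hp (by positivity), hp2]
      nlinarith
    linarith
  · rw [sub_le_iff_le_add]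
    have : t ≤ ((idx l t : ℝ) + 1 / 2) / 2 ^ l + 1 / 2 ^ (l + 1) := by
      rw [div_add_div _ _ (ne_of_gt hp) (by positivity : (2:ℝ)^(l+1) ≠ 0),
        le_div_iff₀ (by positivity), hp2]
      nlinarith
    linarith

lemma measurable_apply0 : Measurable fun x : E1 => x 0 :=
  (measurable_pi_apply 0).comp (WithLp.measurable_ofLp 2 _)

lemma measurable_idx (l : ℕ) : Measurable fun x : E1 => idx l (x 0) := by
  have h1 : Measurable fun x : E1 => ⌊x 0 * 2 ^ l⌋₊ :=
    Nat.measurable_floor.comp (measurable_apply0.mul_const _)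
  exact (measurable_from_nat (f := fun m => min m (2 ^ l - 1))).comp h1

lemma cell_measurable (l j : ℕ) : MeasurableSet (cell l j) :=
  measurable_idx l (measurableSet_singleton j)

lemma cell_disjoint (l : ℕ) : Set.PairwiseDisjoint (↑(Finset.range (2 ^ l))) (cell l) := by
  intro i _ j _ hij
  refine Set.disjoint_left.2 fun x hx hx' => hij ?_
  rw [← hx, ← hx']

lemma cell_cover (l : ℕ) : ⋃ j ∈ Finset.range (2 ^ l), cell l j = Set.univ := by
  ext x
  simp only [Set.mem_iUnion, Set.mem_univ, iff_true, Finset.mem_range]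
  exact ⟨idx l (x 0), idx_lt l _, rfl⟩

lemma sum_cells (ν : Measure E1) [IsProbabilityMeasure ν] (l : ℕ) :
    ∑ j ∈ Finset.range (2 ^ l), ν (cell l j) = 1 := by
  rw [← measure_biUnion_finset (cell_disjoint l) (fun j _ => cell_measurable l j),
    cell_cover, measure_univ]

lemma step_eq_sum (g : ℕ → ℝ) (l : ℕ) (x : E1) :
    g (idx l (x 0)) = ∑ j ∈ Finset.range (2 ^ l),
      Set.indicator (cell l j) (fun _ => g j) x := by
  rw [Finset.sum_eq_single (idx l (x 0))]
  · have hx : x ∈ cell l (idx l (x 0)) := rfl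
    rw [Set.indicator_of_mem hx]
  · intro j _ hj
    refine Set.indicator_of_notMem (fun h => hj ?_) _
    exact (h : idx l (x 0) = j).symm ▸ rfl
  · intro h
    exact absurd (Finset.mem_range.2 (idx_lt l _)) h

lemma integrable_step (ν : Measure E1) [IsFiniteMeasure ν] (g : ℕ → ℝ) (l : ℕ) :
    Integrable (fun x => g (idx l (x 0))) ν := by
  rw [show (fun x : E1 => g (idx l (x 0)))
      = fun x => ∑ j ∈ Finset.range (2 ^ l), Set.indicator (cell l j) (fun _ => g j) x
    from funext (step_eq_sum g l)]
  exact integrable_finset_sum _ fun j _ =>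
    (integrable_const (g j)).indicator (cell_measurable l j)

lemma integral_step (ν : Measure E1) [IsFiniteMeasure ν] (g : ℕ → ℝ) (l : ℕ) :
    ∫ x, g (idx l (x 0)) ∂ν
      = ∑ j ∈ Finset.range (2 ^ l), g j * (ν (cell l j)).toReal := by
  rw [show (fun x : E1 => g (idx l (x 0)))
      = fun x => ∑ j ∈ Finset.range (2 ^ l), Set.indicator (cell l j) (fun _ => g j) x
    from funext (step_eq_sum g l)]
  rw [integral_finset_sum _ fun j _ => (integrable_const (g j)).indicator (cell_measurable l j)]
  refine Finset.sum_congr rfl fun j _ => ?_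
  rw [integral_indicator_const (g j) (cell_measurable l j), smul_eq_mul, mul_comm, measureReal_def]

lemma supDist_eq (x y : E1) : supDist x y = |x 0 - y 0| := by
  unfold supDist; exact ciSup_unique

lemma supDist_pt (x : E1) (b : ℝ) : supDist x (pt b) = |x 0 - b| := supDist_eq x (pt b)

lemma dist_eq_E1 (a b : E1) : dist a b = |a 0 - b 0| := by
  rw [EuclideanSpace.dist_eq, Fin.sum_univ_one, Real.sqrt_sq dist_nonneg, Real.dist_eq]

lemma hol_continuous {q : ℝ} (hq0 : 0 < q) {f : E1 → ℝ} (hf : f ∈ HolClassSup 1 q) :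
    Continuous f := by
  rw [Metric.continuous_iff]
  intro b ε hε
  refine ⟨(ε / 2) ^ (1 / q), Real.rpow_pos_of_pos (by positivity) _, fun a hab => ?_⟩
  have h1 : dist (f a) (f b) ≤ supDist a b ^ q := by rw [Real.dist_eq]; exact hf a b
  have h2 : supDist a b = dist a b := by rw [supDist_eq, dist_eq_E1]
  have h3 : dist a b ^ q < ((ε / 2) ^ (1 / q)) ^ q :=
    Real.rpow_lt_rpow dist_nonneg hab hq0
  have h4 : ((ε / 2) ^ (1 / q)) ^ q = ε / 2 := by
    rw [← Real.rpow_mul (by positivity), one_div, inv_mul_cancel₀ (ne_of_gt hq0),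
      Real.rpow_one]
  calc dist (f a) (f b) ≤ supDist a b ^ q := h1
    _ = dist a b ^ q := by rw [h2]
    _ < ε / 2 := by rw [← h4]; exact h3
    _ < ε := by linarith

lemma mem_cube_iff (x : E1) : x ∈ unitCube 1 ↔ x 0 ∈ Set.Icc (0:ℝ) 1 :=
  ⟨fun h => h 0, fun h i => by rw [Subsingleton.elim i 0]; exact h⟩

lemma cube_measurable : MeasurableSet (unitCube 1) := by
  rw [show unitCube 1 = (fun x : E1 => x 0) ⁻¹' Set.Icc (0:ℝ) 1 from Set.ext mem_cube_iff]
  exact measurable_apply0 measurableSet_Icc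

lemma ae_mem_cube (ν : Measure E1) [IsProbabilityMeasure ν] (hν : ν (unitCube 1) = 1) :
    ∀ᵐ x ∂ν, x ∈ unitCube 1 :=
  ae_iff.2 ((prob_compl_eq_zero_iff cube_measurable).2 hν)

lemma hol_integrable {q : ℝ} (hq : q ∈ Set.Ioc (0:ℝ) 1) {f : E1 → ℝ}
    (hf : f ∈ HolClassSup 1 q) (ν : Measure E1) [IsProbabilityMeasure ν]
    (hν : ν (unitCube 1) = 1) : Integrable f ν := by
  refine Integrable.mono' (integrable_const (|f (pt (1/2))| + 1))
    (hol_continuous hq.1 hf).aestronglyMeasurable ?_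
  filter_upwards [ae_mem_cube ν hν] with x hx
  have h1 : |f x - f (pt (1/2))| ≤ supDist x (pt (1/2)) ^ q := hf _ _
  have h2 : supDist x (pt (1/2)) ≤ 1 := by
    rw [supDist_pt]
    have := (mem_cube_iff x).1 hx
    rw [abs_le]
    constructor <;> [linarith [this.1]; linarith [this.2]]
  have h3 : supDist x (pt (1/2)) ^ q ≤ 1 := by
    refine Real.rpow_le_one ?_ h2 hq.1.le
    rw [supDist_pt]; exact abs_nonneg _
  have : |f x| ≤ |f (pt (1/2))| + |f x - f (pt (1/2))| := by
    have := abs_add_le (f (pt (1/2))) (f x - f (pt (1/2)))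
    simpa using this
  rw [Real.norm_eq_abs]
  linarith



lemma chain {q : ℝ} (hq : q ∈ Set.Ioc (0:ℝ) 1) (ν μ : Measure E1)
    [IsProbabilityMeasure ν] [IsProbabilityMeasure μ]
    (hν : ν (unitCube 1) = 1) (hμ : μ (unitCube 1) = 1)
    (L : ℕ) {f : E1 → ℝ} (hf : f ∈ HolClassSup 1 q) :
    |(∫ x, f x ∂ν) - ∫ x, f x ∂μ| ≤
      (∑ l ∈ Finset.range L, ((1:ℝ) / 2 ^ (l + 2)) ^ q *
        ∑ j ∈ Finset.range (2 ^ (l + 1)),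
          |(ν (cell (l + 1) j)).toReal - (μ (cell (l + 1) j)).toReal|)
      + 2 * ((1:ℝ) / 2 ^ (L + 1)) ^ q := by
  set I : ℕ → ℝ := fun l =>
    (∫ x, f (pt (ctr l (idx l (x 0)))) ∂ν) - ∫ x, f (pt (ctr l (idx l (x 0)))) ∂μ with hI
  have hI0 : I 0 = 0 := by
    simp only [hI, idx_zero]
    rw [integral_const, integral_const]
    simp
  have hstep : ∀ l, |I (l + 1) - I l| ≤ ((1:ℝ) / 2 ^ (l + 2)) ^ q *
      ∑ j ∈ Finset.range (2 ^ (l + 1)),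
        |(ν (cell (l + 1) j)).toReal - (μ (cell (l + 1) j)).toReal| := by
    intro l
    have hrewl : ∀ (ρ : Measure E1) [IsProbabilityMeasure ρ],
        (∫ x, f (pt (ctr l (idx l (x 0)))) ∂ρ)
          = ∑ j ∈ Finset.range (2 ^ (l + 1)),
              f (pt (ctr l (j / 2))) * (ρ (cell (l + 1) j)).toReal := by
      intro ρ _
      rw [show (fun x : E1 => f (pt (ctr l (idx l (x 0)))))
          = fun x => f (pt (ctr l (idx (l + 1) (x 0) / 2)))
        from funext fun x => by rw [idx_succ_div]]
      exact integral_step ρ (fun j => f (pt (ctr l (j / 2)))) (l + 1)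
    have hrews : ∀ (ρ : Measure E1) [IsProbabilityMeasure ρ],
        (∫ x, f (pt (ctr (l + 1) (idx (l + 1) (x 0)))) ∂ρ)
          = ∑ j ∈ Finset.range (2 ^ (l + 1)),
              f (pt (ctr (l + 1) j)) * (ρ (cell (l + 1) j)).toReal :=
      fun ρ _ => integral_step ρ (fun j => f (pt (ctr (l + 1) j))) (l + 1)
    have hdiff : I (l + 1) - I l = ∑ j ∈ Finset.range (2 ^ (l + 1)),
        (f (pt (ctr (l + 1) j)) - f (pt (ctr l (j / 2)))) *
          ((ν (cell (l + 1) j)).toReal - (μ (cell (l + 1) j)).toReal) := by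
      simp only [hI]
      rw [hrews ν, hrews μ, hrewl ν, hrewl μ, ← Finset.sum_sub_distrib,
        ← Finset.sum_sub_distrib, ← Finset.sum_sub_distrib]
      exact Finset.sum_congr rfl fun j _ => by ring
    rw [hdiff, Finset.mul_sum]
    refine (Finset.abs_sum_le_sum_abs _ _).trans (Finset.sum_le_sum fun j _ => ?_)
    rw [abs_mul]
    refine mul_le_mul_of_nonneg_right ?_ (abs_nonneg _)
    refine (hf _ _).trans ?_
    rw [supDist_pt]
    exact Real.rpow_le_rpow (abs_nonneg _) (ctr_dist l j) hq.1.le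
  have hres : ∀ (ρ : Measure E1) [IsProbabilityMeasure ρ], ρ (unitCube 1) = 1 →
      |(∫ x, f x ∂ρ) - ∫ x, f (pt (ctr L (idx L (x 0)))) ∂ρ|
        ≤ ((1:ℝ) / 2 ^ (L + 1)) ^ q := by
    intro ρ _ hρ
    rw [← integral_sub (hol_integrable hq hf ρ hρ)
      (integrable_step ρ (fun j => f (pt (ctr L j))) L)]
    have hb : ∀ᵐ x ∂ρ, ‖f x - f (pt (ctr L (idx L (x 0))))‖ ≤ ((1:ℝ) / 2 ^ (L + 1)) ^ q := by
      filter_upwards [ae_mem_cube ρ hρ] with x hx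
      rw [Real.norm_eq_abs]
      refine (hf _ _).trans ?_
      rw [supDist_pt]
      exact Real.rpow_le_rpow (abs_nonneg _) (abs_sub_ctr L ((mem_cube_iff x).1 hx)) hq.1.le
    have := norm_integral_le_of_norm_le_const (μ := ρ) hb
    simpa [measure_univ, Real.norm_eq_abs] using this
  have htel : I L = ∑ l ∈ Finset.range L, (I (l + 1) - I l) := by
    rw [Finset.sum_range_sub (f := I), hI0, sub_zero]
  have hdecomp : (∫ x, f x ∂ν) - ∫ x, f x ∂μ
      = (((∫ x, f x ∂ν) - ∫ x, f (pt (ctr L (idx L (x 0)))) ∂ν)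
          - ((∫ x, f x ∂μ) - ∫ x, f (pt (ctr L (idx L (x 0)))) ∂μ)) + I L := by
    simp only [hI]; ring
  calc |(∫ x, f x ∂ν) - ∫ x, f x ∂μ|
      ≤ |((∫ x, f x ∂ν) - ∫ x, f (pt (ctr L (idx L (x 0)))) ∂ν)
          - ((∫ x, f x ∂μ) - ∫ x, f (pt (ctr L (idx L (x 0)))) ∂μ)| + |I L| := by
        rw [hdecomp]; exact abs_add_le _ _
    _ ≤ (|(∫ x, f x ∂ν) - ∫ x, f (pt (ctr L (idx L (x 0)))) ∂ν|
          + |(∫ x, f x ∂μ) - ∫ x, f (pt (ctr L (idx L (x 0)))) ∂μ|) + |I L| := by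
        gcongr; exact abs_sub _ _
    _ ≤ (((1:ℝ) / 2 ^ (L + 1)) ^ q + ((1:ℝ) / 2 ^ (L + 1)) ^ q) + |I L| := by
        gcongr
        · exact hres ν hν
        · exact hres μ hμ
    _ ≤ (((1:ℝ) / 2 ^ (L + 1)) ^ q + ((1:ℝ) / 2 ^ (L + 1)) ^ q)
          + ∑ l ∈ Finset.range L, ((1:ℝ) / 2 ^ (l + 2)) ^ q *
              ∑ j ∈ Finset.range (2 ^ (l + 1)),
                |(ν (cell (l + 1) j)).toReal - (μ (cell (l + 1) j)).toReal| := by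
        gcongr
        rw [htel]
        exact (Finset.abs_sum_le_sum_abs _ _).trans (Finset.sum_le_sum fun l _ => hstep l)
    _ = _ := by ring


lemma int_abs_le_sqrt {Ω : Type*} [MeasurableSpace Ω] (P : Measure Ω) [IsProbabilityMeasure P]
    {Y : Ω → ℝ} (hY : MemLp Y 2 P) :
    ∫ ω, |Y ω| ∂P ≤ Real.sqrt (∫ ω, Y ω ^ 2 ∂P) := by
  have habs : MemLp (fun ω => |Y ω|) 2 P := by
    simpa [Real.norm_eq_abs] using hY.norm
  have hvar := variance_nonneg (fun ω => |Y ω|) P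
  rw [variance_eq_sub habs] at hvar
  have he : P[(fun ω => |Y ω|) ^ 2] = ∫ ω, Y ω ^ 2 ∂P := by
    refine integral_congr_ae (Filter.Eventually.of_forall fun ω => ?_)
    simp [sq_abs]
  rw [he] at hvar
  have h0 : 0 ≤ ∫ ω, Y ω ^ 2 ∂P := integral_nonneg fun ω => sq_nonneg _
  rw [Real.le_sqrt (integral_nonneg fun ω => abs_nonneg _) h0]
  linarith

lemma exp_cell {Ω : Type*} [MeasurableSpace Ω] (P : Measure Ω) [IsProbabilityMeasure P]
    (μ : Measure E1) [IsProbabilityMeasure μ]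
    (X : ℕ → Ω → E1) (hmeas : ∀ k, Measurable (X k))
    (hindep : iIndepFun X P)
    (hlaw : ∀ k, Measure.map (X k) P = μ)
    {n : ℕ} (hn : 1 ≤ n) {A : Set E1} (hA : MeasurableSet A) :
    ∫ ω, |(n:ℝ)⁻¹ * (∑ k ∈ Finset.Icc 1 n, Set.indicator A (fun _ => (1:ℝ)) (X k ω))
        - (μ A).toReal| ∂P ≤ Real.sqrt (μ A).toReal / Real.sqrt n := by
  set p : ℝ := (μ A).toReal with hp
  have hp0 : 0 ≤ p := ENNReal.toReal_nonneg
  have hn0 : (n:ℝ) ≠ 0 := Nat.cast_ne_zero.2 (by omega)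
  have hnpos : (0:ℝ) < n := by positivity
  set b : ℕ → Ω → ℝ := fun k ω => Set.indicator A (fun _ => (1:ℝ)) (X k ω) with hb
  have hbmeas : ∀ k, Measurable (b k) := fun k =>
    (measurable_const.indicator hA).comp (hmeas k)
  have hbbd : ∀ k ω, ‖b k ω‖ ≤ 1 := by
    intro k ω
    rw [Real.norm_eq_abs]
    by_cases h : X k ω ∈ A
    · simp [hb, Set.indicator_of_mem h]
    · simp [hb, Set.indicator_of_notMem h]
  have hbmem : ∀ k, MemLp (b k) 2 P := fun k =>
    MemLp.of_bound (hbmeas k).aestronglyMeasurable 1 (Filter.Eventually.of_forall (hbbd k))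
  have hbint : ∀ k, Integrable (b k) P := fun k => (hbmem k).integrable one_le_two
  have hEb : ∀ k, ∫ ω, b k ω ∂P = p := by
    intro k
    rw [hb]
    have : ∫ ω, Set.indicator A (fun _ => (1:ℝ)) (X k ω) ∂P
        = ∫ x, Set.indicator A (fun _ => (1:ℝ)) x ∂(Measure.map (X k) P) := by
      rw [integral_map (hmeas k).aemeasurable
        ((measurable_const.indicator hA).aestronglyMeasurable)]
    rw [this, hlaw k, integral_indicator_const _ hA, smul_eq_mul, mul_one, measureReal_def]
  have hbsq : ∀ k, (b k) ^ 2 = b k := by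
    intro k
    funext ω
    by_cases h : X k ω ∈ A
    · simp [hb, Set.indicator_of_mem h]
    · simp [hb, Set.indicator_of_notMem h]
  have hvarb : ∀ k, variance (b k) P = p - p ^ 2 := by
    intro k
    rw [variance_eq_sub (hbmem k), hbsq k, hEb k]
  have hpair : Set.Pairwise ↑(Finset.Icc 1 n) fun k m => IndepFun (b k) (b m) P := by
    intro k _ m _ hkm
    exact (hindep.indepFun hkm).comp (measurable_const.indicator hA)
      (measurable_const.indicator hA)
  have hvarS : variance (∑ k ∈ Finset.Icc 1 n, b k) P = n * (p - p ^ 2) := by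
    rw [IndepFun.variance_sum (fun k _ => hbmem k) hpair]
    rw [Finset.sum_congr rfl fun k _ => hvarb k, Finset.sum_const, Nat.card_Icc,
      Nat.add_sub_cancel, nsmul_eq_mul]
  set Z : Ω → ℝ := fun ω => (n:ℝ)⁻¹ * ∑ k ∈ Finset.Icc 1 n, b k ω with hZ
  have hZfun : Z = (n:ℝ)⁻¹ • (∑ k ∈ Finset.Icc 1 n, b k) := by
    funext ω
    simp [hZ, Finset.sum_apply]
  have hvarZ : variance Z P = ((n:ℝ)⁻¹) ^ 2 * (n * (p - p ^ 2)) := by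
    rw [hZfun, variance_smul, hvarS]
  have hZmem : MemLp Z 2 P := by
    rw [hZ]
    exact MemLp.const_mul (by
      have := memLp_finset_sum' (Finset.Icc 1 n) (fun k _ => hbmem k)
      exact this.ae_eq (Filter.Eventually.of_forall fun ω => by simp [Finset.sum_apply])) _
  have hEZ : ∫ ω, Z ω ∂P = p := by
    rw [hZ]
    simp only
    rw [integral_const_mul, integral_finset_sum _ fun k _ => hbint k,
      Finset.sum_congr rfl fun k _ => hEb k, Finset.sum_const, Nat.card_Icc,
      Nat.add_sub_cancel, nsmul_eq_mul]
    field_simp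
  have hYmem : MemLp (fun ω => Z ω - p) 2 P := hZmem.sub (memLp_const p)
  have hY2 : ∫ ω, (Z ω - p) ^ 2 ∂P = variance Z P := by
    rw [variance_eq_integral hZmem.aemeasurable, hEZ]
  have key : ∫ ω, |Z ω - p| ∂P ≤ Real.sqrt (variance Z P) := by
    rw [← hY2]
    exact int_abs_le_sqrt P hYmem
  refine key.trans ?_
  have hle : variance Z P ≤ p / n := by
    rw [hvarZ]
    rw [show ((n:ℝ)⁻¹) ^ 2 * (n * (p - p ^ 2)) = (p - p ^ 2) / n by field_simp]
    gcongr
    nlinarith [sq_nonneg p]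
  calc Real.sqrt (variance Z P) ≤ Real.sqrt (p / n) := Real.sqrt_le_sqrt hle
    _ = Real.sqrt p / Real.sqrt n := Real.sqrt_div hp0 n



lemma emp_apply {Ω : Type*} [MeasurableSpace Ω] (X : ℕ → Ω → E1) (n : ℕ) (ω : Ω)
    {A : Set E1} (hA : MeasurableSet A) :
    (empMeasure X n ω A).toReal
      = (n:ℝ)⁻¹ * ∑ k ∈ Finset.Icc 1 n, Set.indicator A (fun _ => (1:ℝ)) (X k ω) := by
  classical
  unfold empMeasure
  have hne : ∀ k ∈ Finset.Icc 1 n, Measure.dirac (X k ω) A ≠ ⊤ := by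
    intro k _
    exact ne_top_of_le_ne_top ENNReal.one_ne_top prob_le_one
  rw [Measure.smul_apply, Measure.finset_sum_apply, smul_eq_mul, ENNReal.toReal_mul,
    ENNReal.toReal_inv, ENNReal.toReal_natCast, ENNReal.toReal_sum hne]
  congr 1
  refine Finset.sum_congr rfl fun k _ => ?_
  rw [Measure.dirac_apply' _ hA, Set.indicator_apply, Set.indicator_apply]
  split_ifs <;> simp

lemma emp_prob {Ω : Type*} [MeasurableSpace Ω] (X : ℕ → Ω → E1) {n : ℕ} (hn : 1 ≤ n) (ω : Ω) :
    IsProbabilityMeasure (empMeasure X n ω) := by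
  constructor
  unfold empMeasure
  rw [Measure.smul_apply, Measure.finset_sum_apply, smul_eq_mul]
  simp only [measure_univ, Finset.sum_const, Nat.card_Icc, smul_eq_mul, mul_one]
  rw [Nat.add_sub_cancel, nsmul_eq_mul, mul_one]
  exact ENNReal.inv_mul_cancel (by exact_mod_cast Nat.one_le_iff_ne_zero.mp hn)
    (ENNReal.natCast_ne_top n)

lemma emp_cube {Ω : Type*} [MeasurableSpace Ω] (X : ℕ → Ω → E1) {n : ℕ} (hn : 1 ≤ n) (ω : Ω)
    (hω : ∀ k ∈ Finset.Icc 1 n, X k ω ∈ unitCube 1) :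
    empMeasure X n ω (unitCube 1) = 1 := by
  unfold empMeasure
  rw [Measure.smul_apply, Measure.finset_sum_apply, smul_eq_mul]
  have h1 : ∀ k ∈ Finset.Icc 1 n, Measure.dirac (X k ω) (unitCube 1) = 1 := by
    intro k hk
    rw [Measure.dirac_apply' _ cube_measurable, Set.indicator_of_mem (hω k hk)]
    rfl
  rw [Finset.sum_congr rfl h1, Finset.sum_const, Nat.card_Icc, Nat.add_sub_cancel,
    nsmul_eq_mul, mul_one]
  exact ENNReal.inv_mul_cancel (by exact_mod_cast Nat.one_le_iff_ne_zero.mp hn)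
    (ENNReal.natCast_ne_top n)

lemma sum_sqrt_cells (μ : Measure E1) [IsProbabilityMeasure μ] (m : ℕ) :
    ∑ j ∈ Finset.range (2 ^ m), Real.sqrt (μ (cell m j)).toReal
      ≤ Real.sqrt ((2:ℝ) ^ m) := by
  have hsum : ∑ j ∈ Finset.range (2 ^ m), (μ (cell m j)).toReal = 1 := by
    rw [← ENNReal.toReal_sum (fun j _ => measure_ne_top μ _), sum_cells μ m,
      ENNReal.toReal_one]
  rw [Real.le_sqrt (Finset.sum_nonneg fun j _ => Real.sqrt_nonneg _) (by positivity)]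
  calc (∑ j ∈ Finset.range (2 ^ m), Real.sqrt (μ (cell m j)).toReal) ^ 2
      ≤ (Finset.range (2 ^ m)).card *
          ∑ j ∈ Finset.range (2 ^ m), Real.sqrt (μ (cell m j)).toReal ^ 2 :=
        sq_sum_le_card_mul_sum_sq
    _ = (2:ℝ) ^ m := by
        rw [Finset.card_range,
          Finset.sum_congr rfl fun j _ => Real.sq_sqrt ENNReal.toReal_nonneg, hsum]
        push_cast
        ring

lemma sum_bound {q : ℝ} (hq : q ∈ Set.Ioc (0:ℝ) 1) (hdq : (1:ℝ) < 2 * q) (L : ℕ) :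
    ∑ l ∈ Finset.range L, ((1:ℝ) / 2 ^ (l + 2)) ^ q * Real.sqrt ((2:ℝ) ^ (l + 1))
      ≤ (2:ℝ) ^ ((1:ℝ) / 2 - 2 * q) / (1 - (2:ℝ) ^ ((1:ℝ) / 2 - q)) := by
  set r : ℝ := (2:ℝ) ^ ((1:ℝ) / 2 - q) with hr
  have hr0 : 0 < r := Real.rpow_pos_of_pos two_pos _
  have hr1 : r < 1 := Real.rpow_lt_one_of_one_lt_of_neg one_lt_two (by linarith)
  have hterm : ∀ l : ℕ, ((1:ℝ) / 2 ^ (l + 2)) ^ q * Real.sqrt ((2:ℝ) ^ (l + 1))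
      = (2:ℝ) ^ ((1:ℝ) / 2 - 2 * q) * r ^ l := by
    intro l
    have h1 : ((1:ℝ) / 2 ^ (l + 2)) = (2:ℝ) ^ (-((l:ℝ) + 2)) := by
      rw [Real.rpow_neg (by norm_num), ← Real.rpow_natCast 2 (l + 2)]
      push_cast
      rw [one_div]
    have h2 : ((1:ℝ) / 2 ^ (l + 2)) ^ q = (2:ℝ) ^ (-((l:ℝ) + 2) * q) := by
      rw [h1, ← Real.rpow_mul (by norm_num)]
    have h3 : Real.sqrt ((2:ℝ) ^ (l + 1)) = (2:ℝ) ^ (((l:ℝ) + 1) / 2) := by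
      rw [Real.sqrt_eq_rpow, ← Real.rpow_natCast 2 (l + 1), ← Real.rpow_mul (by norm_num)]
      congr 1
      push_cast
      ring
    rw [h2, h3, ← Real.rpow_add two_pos, hr,
      ← Real.rpow_natCast ((2:ℝ) ^ ((1:ℝ) / 2 - q)) l, ← Real.rpow_mul (by norm_num),
      ← Real.rpow_add two_pos]
    congr 1
    ring
  rw [Finset.sum_congr rfl fun l _ => hterm l, ← Finset.mul_sum]
  have hsum : ∑ l ∈ Finset.range L, r ^ l ≤ (1 - r)⁻¹ := by
    have hs := summable_geometric_of_lt_one hr0.le hr1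
    have h := hs.sum_le_tsum (Finset.range L) (fun i _ => pow_nonneg hr0.le i)
    rwa [tsum_geometric_of_lt_one hr0.le hr1] at h
  calc (2:ℝ) ^ ((1:ℝ) / 2 - 2 * q) * ∑ l ∈ Finset.range L, r ^ l
      ≤ (2:ℝ) ^ ((1:ℝ) / 2 - 2 * q) * (1 - r)⁻¹ :=
        mul_le_mul_of_nonneg_left hsum (Real.rpow_nonneg (by norm_num) _)
    _ = _ := by ring

lemma tail_tendsto {q : ℝ} (hq0 : 0 < q) :
    Filter.Tendsto (fun L : ℕ => 2 * ((1:ℝ) / 2 ^ (L + 1)) ^ q) Filter.atTop (nhds 0) := by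
  have hx0 : (0:ℝ) ≤ ((1:ℝ) / 2) ^ q := Real.rpow_nonneg (by norm_num) q
  have hx1 : ((1:ℝ) / 2) ^ q < 1 := Real.rpow_lt_one (by norm_num) (by norm_num) hq0
  have h0 : Filter.Tendsto (fun L : ℕ => (((1:ℝ) / 2) ^ q) ^ (L + 1)) Filter.atTop (nhds 0) :=
    (tendsto_pow_atTop_nhds_zero_of_lt_one hx0 hx1).comp (Filter.tendsto_add_atTop_nat 1)
  have heq : (fun L : ℕ => 2 * ((1:ℝ) / 2 ^ (L + 1)) ^ q)
      = fun L => 2 * ((((1:ℝ) / 2) ^ q) ^ (L + 1)) := by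
    funext L
    congr 1
    rw [show (1:ℝ) / 2 ^ (L + 1) = ((1:ℝ) / 2) ^ (L + 1) by rw [div_pow, one_pow],
      ← Real.rpow_natCast ((1:ℝ) / 2) (L + 1), ← Real.rpow_mul (by norm_num), mul_comm,
      Real.rpow_mul (by norm_num), Real.rpow_natCast]
  rw [heq, show (0:ℝ) = 2 * 0 by ring]
  exact h0.const_mul 2


end EmpWAux

open EmpWAux

/-- small dimension. If `d < 2q`, `μ` is a probability measure on `[0,1]^d`
and `(X_k)` are i.i.d. of law `μ`, then for every `n ≥ 1`,
`E[W_{q,∞}(μ̂_n, μ)] ≤ (2^{d/2−2q}/(1 − 2^{d/2−q})) · 1/√n`. -/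
theorem empirical_Wqinf_small_dim
    {Ω : Type*} [MeasurableSpace Ω] (P : Measure Ω) [IsProbabilityMeasure P]
    (d : ℕ) (hd : 1 ≤ d) (q : ℝ) (hq : q ∈ Set.Ioc (0:ℝ) 1) (hdq : (d : ℝ) < 2 * q)
    (μ : Measure (EuclideanSpace ℝ (Fin d))) [IsProbabilityMeasure μ]
    (hμ : μ (unitCube d) = 1)
    (X : ℕ → Ω → EuclideanSpace ℝ (Fin d)) (hmeas : ∀ k, Measurable (X k))
    (hindep : iIndepFun X P)
    (hlaw : ∀ k, Measure.map (X k) P = μ)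
    (n : ℕ) (hn : 1 ≤ n) :
    ∫ ω, Wqinf q (empMeasure X n ω) μ ∂P
      ≤ (2 : ℝ) ^ ((d : ℝ) / 2 - 2 * q) / (1 - (2 : ℝ) ^ ((d : ℝ) / 2 - q))
        * (1 / Real.sqrt n) := by
  classical
  have hd1 : d = 1 := by
    have h2 : (d:ℝ) < 2 := lt_of_lt_of_le hdq (by linarith [hq.2])
    have h3 : d < 2 := by exact_mod_cast h2
    omega
  subst hd1
  obtain ⟨hq0, hq1⟩ := hq
  push_cast at hdq
  simp only [Nat.cast_one]
  have haegood : ∀ᵐ ω ∂P, ∀ k ∈ Finset.Icc 1 n, X k ω ∈ unitCube 1 := by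
    rw [Filter.eventually_all_finset]
    intro k _
    have hXk : P (X k ⁻¹' unitCube 1) = 1 := by
      rw [← Measure.map_apply (hmeas k) cube_measurable, hlaw k]
      exact hμ
    exact ae_iff.2 ((prob_compl_eq_zero_iff ((hmeas k) cube_measurable)).2 hXk)
  have main : ∀ L : ℕ, ∫ ω, Wqinf q (empMeasure X n ω) μ ∂P
      ≤ (2:ℝ) ^ ((1:ℝ) / 2 - 2 * q) / (1 - (2:ℝ) ^ ((1:ℝ) / 2 - q)) * (1 / Real.sqrt n)
        + 2 * ((1:ℝ) / 2 ^ (L + 1)) ^ q := by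
    intro L
    set G : Ω → ℝ := fun ω =>
      (∑ l ∈ Finset.range L, ((1:ℝ) / 2 ^ (l + 2)) ^ q *
        ∑ j ∈ Finset.range (2 ^ (l + 1)),
          |(n:ℝ)⁻¹ * (∑ k ∈ Finset.Icc 1 n,
              Set.indicator (cell (l + 1) j) (fun _ => (1:ℝ)) (X k ω))
            - (μ (cell (l + 1) j)).toReal|)
      + 2 * ((1:ℝ) / 2 ^ (L + 1)) ^ q with hG
    have hYint : ∀ l j, Integrable (fun ω => (n:ℝ)⁻¹ * (∑ k ∈ Finset.Icc 1 n,
        Set.indicator (cell l j) (fun _ => (1:ℝ)) (X k ω)) - (μ (cell l j)).toReal) P := by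
      intro l j
      refine Integrable.sub (Integrable.const_mul ?_ _) (integrable_const _)
      refine integrable_finset_sum _ fun k _ => ?_
      refine Integrable.mono' (integrable_const 1)
        (((measurable_const.indicator (cell_measurable l j)).comp
          (hmeas k)).aestronglyMeasurable) ?_
      refine Filter.Eventually.of_forall fun ω => ?_
      rw [Real.norm_eq_abs]
      by_cases h : X k ω ∈ cell l j
      · simp [Set.indicator_of_mem h]
      · simp [Set.indicator_of_notMem h]
    have hDint : ∀ l, Integrable (fun ω => ∑ j ∈ Finset.range (2 ^ (l + 1)),
        |(n:ℝ)⁻¹ * (∑ k ∈ Finset.Icc 1 n,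
            Set.indicator (cell (l + 1) j) (fun _ => (1:ℝ)) (X k ω))
          - (μ (cell (l + 1) j)).toReal|) P := fun l =>
      integrable_finset_sum _ fun j _ => (hYint (l + 1) j).abs
    have hSint : Integrable (fun ω => ∑ l ∈ Finset.range L, ((1:ℝ) / 2 ^ (l + 2)) ^ q *
        ∑ j ∈ Finset.range (2 ^ (l + 1)),
          |(n:ℝ)⁻¹ * (∑ k ∈ Finset.Icc 1 n,
              Set.indicator (cell (l + 1) j) (fun _ => (1:ℝ)) (X k ω))
            - (μ (cell (l + 1) j)).toReal|) P :=
      integrable_finset_sum _ fun l _ => (hDint l).const_mul _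
    have hGint : Integrable G P := by
      rw [hG]
      exact hSint.add (integrable_const _)
    have hWnonneg : 0 ≤ᵐ[P] fun ω => Wqinf q (empMeasure X n ω) μ :=
      Filter.Eventually.of_forall fun ω => Real.iSup_nonneg fun f => abs_nonneg _
    have hWG : (fun ω => Wqinf q (empMeasure X n ω) μ) ≤ᵐ[P] G := by
      filter_upwards [haegood] with ω hω
      haveI := emp_prob X hn ω
      have hcube := emp_cube X hn ω hω
      have hGnn : 0 ≤ G ω := by
        rw [hG]
        refine add_nonneg (Finset.sum_nonneg fun l _ => mul_nonneg
          (Real.rpow_nonneg (by positivity) _)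
          (Finset.sum_nonneg fun j _ => abs_nonneg _)) (by positivity)
      refine Real.iSup_le (fun f => ?_) hGnn
      obtain ⟨f, hf⟩ := f
      refine (chain ⟨hq0, hq1⟩ (empMeasure X n ω) μ hcube hμ L hf).trans_eq ?_
      rw [hG]
      congr 1
      refine Finset.sum_congr rfl fun l _ => ?_
      congr 1
      refine Finset.sum_congr rfl fun j _ => ?_
      rw [emp_apply X n ω (cell_measurable (l + 1) j)]
    calc ∫ ω, Wqinf q (empMeasure X n ω) μ ∂P
        ≤ ∫ ω, G ω ∂P := integral_mono_of_nonneg hWnonneg hGint hWG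
      _ = (∑ l ∈ Finset.range L, ((1:ℝ) / 2 ^ (l + 2)) ^ q *
            ∑ j ∈ Finset.range (2 ^ (l + 1)),
              ∫ ω, |(n:ℝ)⁻¹ * (∑ k ∈ Finset.Icc 1 n,
                  Set.indicator (cell (l + 1) j) (fun _ => (1:ℝ)) (X k ω))
                - (μ (cell (l + 1) j)).toReal| ∂P)
          + 2 * ((1:ℝ) / 2 ^ (L + 1)) ^ q := by
          rw [hG]
          rw [integral_add hSint (integrable_const _), integral_const, probReal_univ, one_smul]
          congr 1
          rw [integral_finset_sum _ fun l _ => (hDint l).const_mul _]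
          refine Finset.sum_congr rfl fun l _ => ?_
          rw [integral_const_mul]
          congr 1
          rw [integral_finset_sum _ fun j _ => (hYint (l + 1) j).abs]
      _ ≤ (∑ l ∈ Finset.range L, ((1:ℝ) / 2 ^ (l + 2)) ^ q *
            (Real.sqrt ((2:ℝ) ^ (l + 1)) / Real.sqrt n))
          + 2 * ((1:ℝ) / 2 ^ (L + 1)) ^ q := by
          refine add_le_add_left (Finset.sum_le_sum fun l _ => ?_) _
          refine mul_le_mul_of_nonneg_left ?_ (Real.rpow_nonneg (by positivity) _)
          calc ∑ j ∈ Finset.range (2 ^ (l + 1)),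
                ∫ ω, |(n:ℝ)⁻¹ * (∑ k ∈ Finset.Icc 1 n,
                    Set.indicator (cell (l + 1) j) (fun _ => (1:ℝ)) (X k ω))
                  - (μ (cell (l + 1) j)).toReal| ∂P
              ≤ ∑ j ∈ Finset.range (2 ^ (l + 1)),
                  Real.sqrt ((μ (cell (l + 1) j)).toReal) / Real.sqrt n :=
                Finset.sum_le_sum fun j _ =>
                  exp_cell P μ X hmeas hindep hlaw hn (cell_measurable (l + 1) j)
            _ = (∑ j ∈ Finset.range (2 ^ (l + 1)),
                  Real.sqrt ((μ (cell (l + 1) j)).toReal)) / Real.sqrt n := by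
                rw [Finset.sum_div]
            _ ≤ Real.sqrt ((2:ℝ) ^ (l + 1)) / Real.sqrt n := by
                gcongr
                exact sum_sqrt_cells μ (l + 1)
      _ ≤ (2:ℝ) ^ ((1:ℝ) / 2 - 2 * q) / (1 - (2:ℝ) ^ ((1:ℝ) / 2 - q)) * (1 / Real.sqrt n)
          + 2 * ((1:ℝ) / 2 ^ (L + 1)) ^ q := by
          refine add_le_add_left ?_ _
          calc ∑ l ∈ Finset.range L, ((1:ℝ) / 2 ^ (l + 2)) ^ q *
                (Real.sqrt ((2:ℝ) ^ (l + 1)) / Real.sqrt n)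
              = (∑ l ∈ Finset.range L, ((1:ℝ) / 2 ^ (l + 2)) ^ q *
                  Real.sqrt ((2:ℝ) ^ (l + 1))) * (1 / Real.sqrt n) := by
                rw [Finset.sum_mul]
                exact Finset.sum_congr rfl fun l _ => by ring
            _ ≤ (2:ℝ) ^ ((1:ℝ) / 2 - 2 * q) / (1 - (2:ℝ) ^ ((1:ℝ) / 2 - q))
                  * (1 / Real.sqrt n) :=
                mul_le_mul_of_nonneg_right (sum_bound ⟨hq0, hq1⟩ hdq L) (by positivity)
  have htail := (tail_tendsto hq0).const_add
    ((2:ℝ) ^ ((1:ℝ) / 2 - 2 * q) / (1 - (2:ℝ) ^ ((1:ℝ) / 2 - q)) * (1 / Real.sqrt n))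
  rw [add_zero] at htail
  exact ge_of_tendsto' htail main

end
end

section
/- Let d ≥ 1, q ∈ (0,1] with d > 2q, let μ be any probability measure on [0,1]^d and let (X_k)_{k≥1} be i.i.d. random variables with law μ. Then for every n ≥ 1, E[W_{q,∞}(μ̂_n, μ)] ≤ 2 · ((d/2 − q)/(2q(1 − 2^{q − d/2})))^{2q/d} · (1 + q/(2^q (d/2 − q))) · n^{−q/d}. -/
open MeasureTheory ProbabilityTheory
open scoped ENNReal

noncomputable section

namespace WqinfProof


def cellIdx (m : ℕ) (t : ℝ) : ℕ := min ⌊t * (2:ℝ) ^ m⌋₊ (2 ^ m - 1)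

lemma two_pow_pos' (m : ℕ) : 0 < (2:ℕ) ^ m := pow_pos (by norm_num) m

lemma cellIdx_lt (m : ℕ) (t : ℝ) : cellIdx m t < 2 ^ m :=
  lt_of_le_of_lt (min_le_right _ _) (Nat.sub_lt (two_pow_pos' m) one_pos)

lemma cellIdx_le_mul (m : ℕ) {t : ℝ} (ht : 0 ≤ t) : (cellIdx m t : ℝ) ≤ t * 2 ^ m := by
  have h1 : cellIdx m t ≤ ⌊t * (2:ℝ) ^ m⌋₊ := min_le_left _ _
  have h2 : (⌊t * (2:ℝ) ^ m⌋₊ : ℝ) ≤ t * 2 ^ m := Nat.floor_le (by positivity)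
  exact le_trans (Nat.cast_le.mpr h1) h2

lemma mul_le_cellIdx_add_one (m : ℕ) {t : ℝ} (ht : t ≤ 1) :
    t * 2 ^ m ≤ (cellIdx m t : ℝ) + 1 := by
  rcases le_or_gt ⌊t * (2:ℝ) ^ m⌋₊ (2 ^ m - 1) with h | h
  · rw [cellIdx, min_eq_left h]
    exact le_of_lt (Nat.lt_floor_add_one _)
  · rw [cellIdx, min_eq_right h.le]
    have h1 : (1:ℕ) ≤ 2 ^ m := two_pow_pos' m
    have hc : ((2 ^ m - 1 : ℕ) : ℝ) = 2 ^ m - 1 := by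
      rw [Nat.cast_sub h1]; push_cast; ring
    rw [hc]
    have h2 : (0:ℝ) < 2 ^ m := by positivity
    nlinarith

lemma cellIdx_succ_div_two (m : ℕ) (t : ℝ) : cellIdx (m + 1) t / 2 = cellIdx m t := by
  have hfloor : ⌊t * (2:ℝ) ^ (m+1)⌋₊ / 2 = ⌊t * (2:ℝ) ^ m⌋₊ := by
    have h : t * (2:ℝ) ^ (m+1) / ((2:ℕ):ℝ) = t * (2:ℝ) ^ m := by push_cast; ring
    rw [← Nat.floor_div_natCast, h]
  have hmono : Monotone (fun x : ℕ => x / 2) := fun a b h => Nat.div_le_div_right h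
  have hmin := hmono.map_min (a := ⌊t * (2:ℝ) ^ (m+1)⌋₊) (b := 2 ^ (m+1) - 1)
  have hcap : (2 ^ (m+1) - 1) / 2 = 2 ^ m - 1 := by
    have : (2:ℕ) ^ (m+1) = 2 * 2 ^ m := by rw [pow_succ]; ring
    omega
  simp only [cellIdx]
  rw [hmin, hfloor, hcap]

lemma abs_sub_cellCenter (m : ℕ) {t : ℝ} (ht : t ∈ Set.Icc (0:ℝ) 1) :
    |t - ((cellIdx m t : ℝ) + 1/2) / 2 ^ m| ≤ 1 / 2 ^ (m + 1) := by
  have h2 : (0:ℝ) < 2 ^ m := by positivity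
  have h1 := cellIdx_le_mul m ht.1
  have h2' := mul_le_cellIdx_add_one m ht.2
  have heq : t - ((cellIdx m t : ℝ) + 1/2) / 2 ^ m
      = (t * 2 ^ m - ((cellIdx m t : ℝ) + 1/2)) / 2 ^ m := by field_simp
  have key : |t * 2 ^ m - ((cellIdx m t : ℝ) + 1/2)| ≤ 1/2 := by
    rw [abs_le]; constructor <;> [linarith; linarith]
  rw [heq, abs_div, abs_of_pos h2]
  calc |t * 2 ^ m - ((cellIdx m t : ℝ) + 1/2)| / 2 ^ m ≤ (1/2) / 2 ^ m := by gcongr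
  _ = 1 / 2 ^ (m+1) := by rw [pow_succ]; ring

lemma abs_center_center (m : ℕ) (k : ℕ) :
    |((k:ℝ) + 1/2) / 2 ^ (m+1) - (((k/2 : ℕ) : ℝ) + 1/2) / 2 ^ m| ≤ 1 / 2 ^ (m+2) := by
  rcases Nat.even_or_odd k with ⟨c, hc⟩ | ⟨c, hc⟩
  · subst hc
    have hdiv : (c + c) / 2 = c := by omega
    rw [hdiv]
    have heq : (((c:ℝ) + c) + 1/2) / 2 ^ (m+1) - ((c:ℝ) + 1/2) / 2 ^ m = -(1 / 2 ^ (m+2)) := by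
      simp only [pow_succ]; field_simp; ring
    push_cast
    rw [heq, abs_neg, abs_of_nonneg (by positivity)]
  · subst hc
    have hdiv : (2*c + 1) / 2 = c := by omega
    rw [hdiv]
    have heq : ((2*(c:ℝ) + 1) + 1/2) / 2 ^ (m+1) - ((c:ℝ) + 1/2) / 2 ^ m = 1 / 2 ^ (m+2) := by
      simp only [pow_succ]; field_simp; ring
    push_cast
    rw [heq, abs_of_nonneg (by positivity)]

variable {d : ℕ}

def code (m : ℕ) (x : EuclideanSpace ℝ (Fin d)) : Fin d → ℕ := fun i => cellIdx m (x i)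

def cell (d m : ℕ) (j : Fin d → ℕ) : Set (EuclideanSpace ℝ (Fin d)) := {x | code m x = j}

def center (d m : ℕ) (j : Fin d → ℕ) : EuclideanSpace ℝ (Fin d) :=
  WithLp.toLp 2 (fun i => ((j i : ℝ) + 1/2) / 2 ^ m)

def Jset (d m : ℕ) : Finset (Fin d → ℕ) := Fintype.piFinset fun _ => Finset.range (2 ^ m)

lemma measurable_cellIdx (m : ℕ) : Measurable (cellIdx m) := by
  apply Measurable.min ?_ measurable_const
  exact Nat.measurable_floor.comp (measurable_id.mul_const _)

lemma measurable_coord (i : Fin d) : Measurable (fun x : EuclideanSpace ℝ (Fin d) => x i) :=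
  (EuclideanSpace.proj i).continuous.measurable

lemma measurableSet_cell (m : ℕ) (j : Fin d → ℕ) : MeasurableSet (cell d m j) := by
  have h : cell d m j = ⋂ i, (fun x : EuclideanSpace ℝ (Fin d) => x i) ⁻¹' (cellIdx m ⁻¹' {j i}) := by
    ext x
    simp only [cell, code, Set.mem_setOf_eq, Set.mem_iInter, Set.mem_preimage,
      Set.mem_singleton_iff, funext_iff]
  rw [h]
  exact MeasurableSet.iInter fun i =>
    (measurable_coord i) ((measurable_cellIdx m) (MeasurableSet.singleton _))

lemma measurableSet_unitCube' : MeasurableSet {x : EuclideanSpace ℝ (Fin d) | ∀ i, x i ∈ Set.Icc (0:ℝ) 1} := by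
  have h : {x : EuclideanSpace ℝ (Fin d) | ∀ i, x i ∈ Set.Icc (0:ℝ) 1}
      = ⋂ i, (fun x : EuclideanSpace ℝ (Fin d) => x i) ⁻¹' (Set.Icc 0 1) := by
    ext x; simp
  rw [h]
  exact MeasurableSet.iInter fun i => (measurable_coord i) measurableSet_Icc

lemma code_mem_Jset (m : ℕ) (x : EuclideanSpace ℝ (Fin d)) : code m x ∈ Jset d m := by
  simp only [Jset, Fintype.mem_piFinset, Finset.mem_range]
  exact fun i => cellIdx_lt m (x i)

lemma sum_cell_eq_one (ν : Measure (EuclideanSpace ℝ (Fin d))) [IsProbabilityMeasure ν] (m : ℕ) :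
    ∑ j ∈ Jset d m, ν (cell d m j) = 1 := by
  have hdisj : (Jset d m : Set (Fin d → ℕ)).PairwiseDisjoint (cell d m) := by
    intro a _ b _ hab
    refine Set.disjoint_left.2 fun x hx hx' => hab ?_
    exact hx.symm.trans hx'
  rw [← measure_biUnion_finset hdisj fun j _ => measurableSet_cell m j]
  have hcov : ⋃ j ∈ Jset d m, cell d m j = Set.univ := by
    ext x
    simp only [Set.mem_iUnion, Set.mem_univ, iff_true]
    exact ⟨code m x, code_mem_Jset m x, rfl⟩
  rw [hcov, measure_univ]

lemma card_Jset (d m : ℕ) : (Jset d m).card = 2 ^ (d * m) := by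
  simp [Jset, Finset.card_range]
  rw [← pow_mul]
  ring_nf

lemma piecewise_eq_sum_indicator (m : ℕ) (v : (Fin d → ℕ) → ℝ) (x : EuclideanSpace ℝ (Fin d)) :
    v (code m x) = ∑ j ∈ Jset d m, (cell d m j).indicator (fun _ => v j) x := by
  rw [Finset.sum_eq_single (code m x)]
  · rw [Set.indicator_of_mem (by exact rfl)]
  · intro j _ hne
    refine Set.indicator_of_notMem (fun h => hne ?_) _
    exact (Set.mem_setOf_eq ▸ h).symm
  · exact fun h => absurd (code_mem_Jset m x) h

lemma integrable_piecewise (ν : Measure (EuclideanSpace ℝ (Fin d))) [IsFiniteMeasure ν] (m : ℕ)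
    (v : (Fin d → ℕ) → ℝ) : Integrable (fun x => v (code m x)) ν := by
  have h : (fun x => v (code m x))
      = fun x => ∑ j ∈ Jset d m, (cell d m j).indicator (fun _ => v j) x :=
    funext fun x => piecewise_eq_sum_indicator m v x
  rw [h]
  exact integrable_finset_sum _ fun j _ => (integrable_const (v j)).indicator (measurableSet_cell m j)

lemma integral_piecewise (ν : Measure (EuclideanSpace ℝ (Fin d))) [IsFiniteMeasure ν] (m : ℕ)
    (v : (Fin d → ℕ) → ℝ) :
    ∫ x, v (code m x) ∂ν = ∑ j ∈ Jset d m, v j * (ν (cell d m j)).toReal := by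
  have h : (fun x => v (code m x))
      = fun x => ∑ j ∈ Jset d m, (cell d m j).indicator (fun _ => v j) x :=
    funext fun x => piecewise_eq_sum_indicator m v x
  rw [h, integral_finset_sum _ fun j _ =>
    (integrable_const (v j)).indicator (measurableSet_cell m j)]
  refine Finset.sum_congr rfl fun j _ => ?_
  rw [integral_indicator_const _ (measurableSet_cell m j), smul_eq_mul, mul_comm, measureReal_def]

lemma supDist_nonneg (x y : EuclideanSpace ℝ (Fin d)) : 0 ≤ supDist x y :=
  Real.iSup_nonneg fun i => abs_nonneg _

lemma supDist_le {x y : EuclideanSpace ℝ (Fin d)} {c : ℝ} (hc : 0 ≤ c)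
    (h : ∀ i, |x i - y i| ≤ c) : supDist x y ≤ c :=
  Real.iSup_le h hc

lemma hol_le {q : ℝ} (hq : 0 < q) {f : EuclideanSpace ℝ (Fin d) → ℝ} (hf : f ∈ HolClassSup d q)
    {x y : EuclideanSpace ℝ (Fin d)} {c : ℝ} (hc : 0 ≤ c) (h : ∀ i, |x i - y i| ≤ c) :
    |f x - f y| ≤ c ^ q :=
  (hf x y).trans (Real.rpow_le_rpow (supDist_nonneg x y) (supDist_le hc h) hq.le)

lemma hol_continuous {q : ℝ} (hq : 0 < q) {f : EuclideanSpace ℝ (Fin d) → ℝ}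
    (hf : f ∈ HolClassSup d q) : Continuous f := by
  rw [Metric.continuous_iff]
  intro x ε hε
  refine ⟨ε ^ (q⁻¹ : ℝ), by positivity, fun y hy => ?_⟩
  have hxy : ∀ i, |y i - x i| ≤ dist y x := by
    intro i
    have h1 : dist (y i) (x i) ≤ dist y x := by
      rw [EuclideanSpace.dist_eq]
      have : dist (y i) (x i) = Real.sqrt (dist (y i) (x i) ^ 2) :=
        (Real.sqrt_sq dist_nonneg).symm
      rw [this]
      apply Real.sqrt_le_sqrt
      exact Finset.single_le_sum (f := fun i => dist (y i) (x i) ^ 2)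
        (fun i _ => sq_nonneg _) (Finset.mem_univ i)
    rwa [Real.dist_eq] at h1
  rw [Real.dist_eq]
  calc |f y - f x| ≤ (dist y x) ^ q := hol_le hq hf dist_nonneg hxy
  _ < (ε ^ (q⁻¹ : ℝ)) ^ q := Real.rpow_lt_rpow dist_nonneg hy hq
  _ = ε := by rw [← Real.rpow_mul hε.le, inv_mul_cancel₀ hq.ne', Real.rpow_one]

lemma hol_integrable {q : ℝ} (hq : 0 < q) {f : EuclideanSpace ℝ (Fin d) → ℝ}
    (hf : f ∈ HolClassSup d q) (ν : Measure (EuclideanSpace ℝ (Fin d)))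
    [IsProbabilityMeasure ν]
    (hν : ν {x : EuclideanSpace ℝ (Fin d) | ∀ i, x i ∈ Set.Icc (0:ℝ) 1} = 1) :
    Integrable f ν := by
  set x₀ : EuclideanSpace ℝ (Fin d) := center d 0 (fun _ => 0) with hx₀
  refine Integrable.mono' (integrable_const (|f x₀| + 1))
    (hol_continuous hq hf).aestronglyMeasurable ?_
  have h0 : ν {x : EuclideanSpace ℝ (Fin d) | ∀ i, x i ∈ Set.Icc (0:ℝ) 1}ᶜ = 0 := by
    rw [measure_compl measurableSet_unitCube' (measure_ne_top _ _), hν, measure_univ]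
    simp
  have hae : ∀ᵐ x ∂ν, x ∈ {x : EuclideanSpace ℝ (Fin d) | ∀ i, x i ∈ Set.Icc (0:ℝ) 1} := by
    rw [ae_iff]
    exact h0
  filter_upwards [hae] with x hx
  have hco : ∀ i, |x i - x₀ i| ≤ 1 := by
    intro i
    have h1 : x₀ i = 1/2 := by
      show ((((0:ℕ)) : ℝ) + 1/2) / 2 ^ 0 = 1/2
      norm_num
    rw [h1, abs_le]
    have := hx i
    simp only [Set.mem_setOf_eq, Set.mem_Icc] at this
    constructor <;> linarith [this.1, this.2]
  have hb : |f x - f x₀| ≤ 1 := by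
    have := hol_le hq hf zero_le_one hco
    simpa [Real.one_rpow] using this
  rw [Real.norm_eq_abs]
  calc |f x| ≤ |f x₀| + |f x - f x₀| := by
        have := abs_add_le (f x₀) (f x - f x₀); simpa using this
  _ ≤ |f x₀| + 1 := by linarith

lemma center_parent_coord (m : ℕ) (j : Fin d → ℕ) (i : Fin d) :
    |center d (m+1) j i - center d m (fun i => j i / 2) i| ≤ 1 / 2 ^ (m+2) := by
  show |((j i : ℝ) + 1/2) / 2 ^ (m+1) - (((j i / 2 : ℕ) : ℝ) + 1/2) / 2 ^ m| ≤ 1 / 2 ^ (m+2)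
  exact abs_center_center m (j i)

lemma chain_bound {q : ℝ} (hq : 0 < q)
    (ν μ : Measure (EuclideanSpace ℝ (Fin d)))
    [IsProbabilityMeasure ν] [IsProbabilityMeasure μ]
    (hν : ν {x : EuclideanSpace ℝ (Fin d) | ∀ i, x i ∈ Set.Icc (0:ℝ) 1} = 1)
    (hμ : μ {x : EuclideanSpace ℝ (Fin d) | ∀ i, x i ∈ Set.Icc (0:ℝ) 1} = 1)
    {f : EuclideanSpace ℝ (Fin d) → ℝ} (hf : f ∈ HolClassSup d q) (M : ℕ) :
    |∫ x, f x ∂ν - ∫ x, f x ∂μ| ≤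
      2 * (((2:ℝ) ^ (M+1))⁻¹) ^ q
      + ∑ m ∈ Finset.range M, (((2:ℝ) ^ (m+2))⁻¹) ^ q *
          ∑ j ∈ Jset d (m+1),
            |(ν (cell d (m+1) j)).toReal - (μ (cell d (m+1) j)).toReal| := by
  set F : ℕ → ℝ := fun m => ∑ j ∈ Jset d m,
    f (center d m j) * ((ν (cell d m j)).toReal - (μ (cell d m j)).toReal) with hF
  have hFint : ∀ m, F m = (∫ x, f (center d m (code m x)) ∂ν)
      - ∫ x, f (center d m (code m x)) ∂μ := by
    intro m
    rw [integral_piecewise ν m (fun j => f (center d m j)),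
      integral_piecewise μ m (fun j => f (center d m j)), ← Finset.sum_sub_distrib]
    exact Finset.sum_congr rfl fun j _ => by ring
  -- level 0
  have hcode0 : ∀ x : EuclideanSpace ℝ (Fin d), code (d := d) 0 x = fun _ => 0 := by
    intro x; funext i
    simp [code, cellIdx]
  have hF0 : F 0 = 0 := by
    rw [hFint 0]
    have h1 : ∀ x : EuclideanSpace ℝ (Fin d),
        f (center d 0 (code 0 x)) = f (center d 0 (fun _ => 0)) := by
      intro x; rw [hcode0 x]
    simp_rw [h1]
    rw [integral_const, integral_const]
    simp
  -- increments
  have hincr : ∀ m, |F (m+1) - F m| ≤ (((2:ℝ) ^ (m+2))⁻¹) ^ q *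
      ∑ j ∈ Jset d (m+1),
        |(ν (cell d (m+1) j)).toReal - (μ (cell d (m+1) j)).toReal| := by
    intro m
    have hparent : ∀ x : EuclideanSpace ℝ (Fin d),
        f (center d m (code m x))
          = (fun j : Fin d → ℕ => f (center d m (fun i => j i / 2))) (code (m+1) x) := by
      intro x
      have hc : code (d := d) m x = fun i => code (m+1) x i / 2 :=
        funext fun i => (cellIdx_succ_div_two m (x i)).symm
      show f (center d m (code m x)) = f (center d m (fun i => code (m+1) x i / 2))
      rw [hc]
    have hFm : F m = ∑ j ∈ Jset d (m+1),
        f (center d m (fun i => j i / 2))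
          * ((ν (cell d (m+1) j)).toReal - (μ (cell d (m+1) j)).toReal) := by
      rw [hFint m]
      simp_rw [hparent]
      rw [integral_piecewise ν (m+1) (fun j => f (center d m (fun i => j i / 2))),
        integral_piecewise μ (m+1) (fun j => f (center d m (fun i => j i / 2))),
        ← Finset.sum_sub_distrib]
      exact Finset.sum_congr rfl fun j _ => by ring
    have hFm1 : F (m+1) = ∑ j ∈ Jset d (m+1),
        f (center d (m+1) j) * ((ν (cell d (m+1) j)).toReal - (μ (cell d (m+1) j)).toReal) := rfl
    rw [hFm1, hFm, ← Finset.sum_sub_distrib]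
    have hstep : ∀ j ∈ Jset d (m+1),
        |f (center d (m+1) j) * ((ν (cell d (m+1) j)).toReal - (μ (cell d (m+1) j)).toReal)
          - f (center d m (fun i => j i / 2))
            * ((ν (cell d (m+1) j)).toReal - (μ (cell d (m+1) j)).toReal)|
        ≤ (((2:ℝ) ^ (m+2))⁻¹) ^ q
            * |(ν (cell d (m+1) j)).toReal - (μ (cell d (m+1) j)).toReal| := by
      intro j _
      rw [← sub_mul, abs_mul]
      apply mul_le_mul_of_nonneg_right _ (abs_nonneg _)
      have := hol_le hq hf (x := center d (m+1) j) (y := center d m (fun i => j i / 2))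
        (c := ((2:ℝ) ^ (m+2))⁻¹) (by positivity) (fun i => by
          rw [← one_div]
          exact center_parent_coord m j i)
      exact this
    calc |∑ j ∈ Jset d (m+1), _| ≤ _ := Finset.abs_sum_le_sum_abs _ _
    _ ≤ ∑ j ∈ Jset d (m+1), (((2:ℝ) ^ (m+2))⁻¹) ^ q
          * |(ν (cell d (m+1) j)).toReal - (μ (cell d (m+1) j)).toReal| :=
      Finset.sum_le_sum hstep
    _ = _ := by rw [Finset.mul_sum]
  -- approximation at level M
  have happrox : ∀ (ρ : Measure (EuclideanSpace ℝ (Fin d))) [IsProbabilityMeasure ρ],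
      ρ {x : EuclideanSpace ℝ (Fin d) | ∀ i, x i ∈ Set.Icc (0:ℝ) 1} = 1 →
      |∫ x, f x ∂ρ - ∫ x, f (center d M (code M x)) ∂ρ| ≤ (((2:ℝ) ^ (M+1))⁻¹) ^ q := by
    intro ρ hρinst hρ
    have hint1 : Integrable f ρ := hol_integrable hq hf ρ hρ
    have hint2 : Integrable (fun x => f (center d M (code M x))) ρ :=
      integrable_piecewise ρ M (fun j => f (center d M j))
    rw [← integral_sub hint1 hint2]
    have hae : ∀ᵐ x ∂ρ, x ∈ {x : EuclideanSpace ℝ (Fin d) | ∀ i, x i ∈ Set.Icc (0:ℝ) 1} := by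
      rw [ae_iff]
      rw [show {x | ¬ x ∈ {x : EuclideanSpace ℝ (Fin d) | ∀ i, x i ∈ Set.Icc (0:ℝ) 1}}
        = {x : EuclideanSpace ℝ (Fin d) | ∀ i, x i ∈ Set.Icc (0:ℝ) 1}ᶜ from rfl]
      rw [measure_compl measurableSet_unitCube' (measure_ne_top _ _), hρ, measure_univ]
      simp
    have hbd : ∀ᵐ x ∂ρ, ‖f x - f (center d M (code M x))‖ ≤ (((2:ℝ) ^ (M+1))⁻¹) ^ q := by
      filter_upwards [hae] with x hx
      rw [Real.norm_eq_abs]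
      refine hol_le hq hf (by positivity) fun i => ?_
      rw [← one_div]
      exact abs_sub_cellCenter M (hx i)
    have := norm_integral_le_of_norm_le_const hbd
    rwa [probReal_univ, mul_one, Real.norm_eq_abs] at this
  -- telescope
  have htel : F M = ∑ m ∈ Finset.range M, (F (m+1) - F m) := by
    rw [Finset.sum_range_sub F M, hF0, sub_zero]
  have hFMbound : |F M| ≤ ∑ m ∈ Finset.range M, (((2:ℝ) ^ (m+2))⁻¹) ^ q *
      ∑ j ∈ Jset d (m+1),
        |(ν (cell d (m+1) j)).toReal - (μ (cell d (m+1) j)).toReal| := by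
    rw [htel]
    exact (Finset.abs_sum_le_sum_abs _ _).trans (Finset.sum_le_sum fun m _ => hincr m)
  have hclose : |(∫ x, f x ∂ν - ∫ x, f x ∂μ) - F M| ≤ 2 * (((2:ℝ) ^ (M+1))⁻¹) ^ q := by
    rw [hFint M]
    have h1 := happrox ν hν
    have h2 := happrox μ hμ
    calc |(∫ x, f x ∂ν - ∫ x, f x ∂μ)
        - ((∫ x, f (center d M (code M x)) ∂ν) - ∫ x, f (center d M (code M x)) ∂μ)|
        = |(∫ x, f x ∂ν - ∫ x, f (center d M (code M x)) ∂ν)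
          - (∫ x, f x ∂μ - ∫ x, f (center d M (code M x)) ∂μ)| := by ring_nf
    _ ≤ |∫ x, f x ∂ν - ∫ x, f (center d M (code M x)) ∂ν|
          + |∫ x, f x ∂μ - ∫ x, f (center d M (code M x)) ∂μ| := abs_sub _ _
    _ ≤ (((2:ℝ) ^ (M+1))⁻¹) ^ q + (((2:ℝ) ^ (M+1))⁻¹) ^ q := add_le_add h1 h2
    _ = 2 * (((2:ℝ) ^ (M+1))⁻¹) ^ q := by ring
  calc |∫ x, f x ∂ν - ∫ x, f x ∂μ|
      = |((∫ x, f x ∂ν - ∫ x, f x ∂μ) - F M) + F M| := by ring_nf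
  _ ≤ |(∫ x, f x ∂ν - ∫ x, f x ∂μ) - F M| + |F M| := abs_add_le _ _
  _ ≤ _ := add_le_add hclose hFMbound

section Prob

variable {Ω : Type*} [MeasurableSpace Ω] {P : Measure Ω} [IsProbabilityMeasure P]
variable {E' : Type*} [MeasurableSpace E']

lemma emp_apply (X : ℕ → Ω → E') (n : ℕ) (ω : Ω) {s : Set E'} (hs : MeasurableSet s) :
    ((empMeasure X n ω) s).toReal
      = (n:ℝ)⁻¹ * ∑ k ∈ Finset.Icc 1 n, s.indicator (fun _ => (1:ℝ)) (X k ω) := by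
  rw [empMeasure, Measure.smul_apply, Measure.finset_sum_apply]
  rw [smul_eq_mul, ENNReal.toReal_mul]
  congr 1
  · simp
  rw [ENNReal.toReal_sum]
  · refine Finset.sum_congr rfl fun k _ => ?_
    rw [Measure.dirac_apply' _ hs]
    by_cases h : X k ω ∈ s <;> simp [h]
  · intro k _
    rw [Measure.dirac_apply' _ hs]
    by_cases h : X k ω ∈ s <;> simp [h]

lemma emp_isProb (X : ℕ → Ω → E') {n : ℕ} (hn : 1 ≤ n) (ω : Ω) :
    IsProbabilityMeasure (empMeasure X n ω) := by
  constructor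
  rw [empMeasure, Measure.smul_apply, Measure.finset_sum_apply]
  simp only [measure_univ, Finset.sum_const, Nat.card_Icc, smul_eq_mul, mul_one]
  have h1 : n + 1 - 1 = n := by omega
  rw [h1, nsmul_eq_mul, mul_one, ENNReal.inv_mul_cancel (by simp; omega) (by simp)]

lemma emp_cube_eq_one {d : ℕ} (X : ℕ → Ω → EuclideanSpace ℝ (Fin d)) {n : ℕ} (hn : 1 ≤ n) (ω : Ω)
    (h : ∀ k ∈ Finset.Icc 1 n, X k ω ∈ {x : EuclideanSpace ℝ (Fin d) | ∀ i, x i ∈ Set.Icc (0:ℝ) 1}) :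
    empMeasure X n ω {x : EuclideanSpace ℝ (Fin d) | ∀ i, x i ∈ Set.Icc (0:ℝ) 1} = 1 := by
  rw [empMeasure, Measure.smul_apply, Measure.finset_sum_apply]
  have h2 : ∀ k ∈ Finset.Icc 1 n,
      Measure.dirac (X k ω) {x : EuclideanSpace ℝ (Fin d) | ∀ i, x i ∈ Set.Icc (0:ℝ) 1} = 1 :=
    fun k hk => by
      rw [Measure.dirac_apply' _ measurableSet_unitCube']
      exact Set.indicator_of_mem (h k hk) 1
  rw [Finset.sum_congr rfl h2]
  simp only [Finset.sum_const, Nat.card_Icc, smul_eq_mul, mul_one]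
  have h1 : n + 1 - 1 = n := by omega
  rw [h1, nsmul_eq_mul, mul_one, ENNReal.inv_mul_cancel (by simp; omega) (by simp)]

lemma abs_integral_le_sqrt (W : Ω → ℝ) (hW : Integrable W P)
    (hW2 : Integrable (fun ω => W ω ^ 2) P) :
    ∫ ω, |W ω| ∂P ≤ Real.sqrt (∫ ω, W ω ^ 2 ∂P) := by
  set a := ∫ ω, |W ω| ∂P with ha
  have ha0 : 0 ≤ a := integral_nonneg fun ω => abs_nonneg _
  have hnn : 0 ≤ ∫ ω, (|W ω| - a) ^ 2 ∂P := integral_nonneg fun ω => sq_nonneg _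
  have hexp : ∫ ω, (|W ω| - a) ^ 2 ∂P = (∫ ω, W ω ^ 2 ∂P) - a ^ 2 := by
    have hpt : ∀ ω, (|W ω| - a) ^ 2 = W ω ^ 2 - (2*a) * |W ω| + a ^ 2 := fun ω => by
      rw [sub_sq, sq_abs]; ring
    have hiabs : Integrable (fun ω => 2 * a * |W ω|) P := hW.abs.const_mul (2*a)
    have hsubint : Integrable (fun ω => W ω ^ 2 - 2 * a * |W ω|) P := hW2.sub hiabs
    simp_rw [hpt]
    rw [integral_add hsubint (integrable_const _), integral_sub hW2 hiabs,
      integral_const_mul, integral_const]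
    simp only [measure_univ, probReal_univ, ENNReal.toReal_one, smul_eq_mul, one_mul]
    rw [← ha]; ring
  have h2 : a ^ 2 ≤ ∫ ω, W ω ^ 2 ∂P := by linarith
  rw [Real.le_sqrt ha0 (le_trans (sq_nonneg a) h2)]
  exact h2

lemma exp_abs_emp_sub_le {d : ℕ}
    (X : ℕ → Ω → EuclideanSpace ℝ (Fin d)) (hmeas : ∀ k, Measurable (X k))
    (hindep : iIndepFun X P)
    (μ : Measure (EuclideanSpace ℝ (Fin d))) [IsProbabilityMeasure μ]
    (hlaw : ∀ k, Measure.map (X k) P = μ)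
    (n : ℕ) (hn : 1 ≤ n) {s : Set (EuclideanSpace ℝ (Fin d))} (hs : MeasurableSet s) :
    ∫ ω, |((empMeasure X n ω) s).toReal - (μ s).toReal| ∂P
      ≤ Real.sqrt ((μ s).toReal / n) := by
  set p := (μ s).toReal with hp
  have hp0 : 0 ≤ p := ENNReal.toReal_nonneg
  set g : EuclideanSpace ℝ (Fin d) → ℝ := fun x => s.indicator (fun _ => (1:ℝ)) x - p with hg
  have hgmeas : Measurable g := (measurable_const.indicator hs).sub measurable_const
  have hgbd : ∀ x, ‖g x‖ ≤ 1 + |p| := by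
    intro x
    rw [Real.norm_eq_abs]
    refine (abs_sub _ _).trans ?_
    gcongr
    by_cases h : x ∈ s <;> simp [h]
  have hZmeas : ∀ k, Measurable (fun ω => g (X k ω)) := fun k => hgmeas.comp (hmeas k)
  have hZint : ∀ k, Integrable (fun ω => g (X k ω)) P := fun k =>
    Integrable.mono' (integrable_const (1 + |p|)) (hZmeas k).aestronglyMeasurable
      (ae_of_all _ fun ω => hgbd _)
  have hZZint : ∀ k l, Integrable (fun ω => g (X k ω) * g (X l ω)) P := by
    intro k l
    refine Integrable.mono' (integrable_const ((1 + |p|) * (1 + |p|)))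
      ((hZmeas k).mul (hZmeas l)).aestronglyMeasurable (ae_of_all _ fun ω => ?_)
    rw [Real.norm_eq_abs, abs_mul]
    have h1 := hgbd (X k ω); have h2 := hgbd (X l ω)
    rw [Real.norm_eq_abs] at h1 h2
    have : (0:ℝ) ≤ 1 + |p| := by positivity
    exact mul_le_mul h1 h2 (abs_nonneg _) this
  have hindint : Integrable (fun x => s.indicator (fun _ => (1:ℝ)) x) μ :=
    (integrable_const (1:ℝ)).indicator hs
  have hEg : ∫ x, g x ∂μ = 0 := by
    rw [hg]
    rw [integral_sub hindint (integrable_const p), integral_indicator_const _ hs, integral_const]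
    simp [hp, measureReal_def]
  have hEZ : ∀ k, ∫ ω, g (X k ω) ∂P = 0 := by
    intro k
    have h0 : ∫ ω, g (X k ω) ∂P = ∫ x, g x ∂(Measure.map (X k) P) :=
      (integral_map (hmeas k).aemeasurable
        hgmeas.aestronglyMeasurable).symm
    rw [h0, hlaw k, hEg]
  have hEZ2 : ∀ k, ∫ ω, g (X k ω) ^ 2 ∂P ≤ p := by
    intro k
    have hmeas2 : Measurable (fun x => g x ^ 2) := hgmeas.pow_const 2
    have h0 : ∫ ω, g (X k ω) ^ 2 ∂P = ∫ x, g x ^ 2 ∂(Measure.map (X k) P) :=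
      (integral_map (hmeas k).aemeasurable
        hmeas2.aestronglyMeasurable).symm
    rw [h0, hlaw k]
    have hpt : ∀ x, g x ^ 2 = s.indicator (fun _ => (1 - 2*p : ℝ)) x + p ^ 2 := by
      intro x
      by_cases h : x ∈ s <;> simp [hg, h] <;> ring
    simp_rw [hpt]
    rw [integral_add ((integrable_const _).indicator hs) (integrable_const _),
      integral_indicator_const _ hs, integral_const]
    simp only [measure_univ, probReal_univ, measureReal_def, ENNReal.toReal_one, smul_eq_mul, one_mul, ← hp]
    nlinarith [sq_nonneg p]
  have hcross : ∀ k l, k ≠ l → ∫ ω, g (X k ω) * g (X l ω) ∂P = 0 := by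
    intro k l hkl
    have hind : IndepFun (fun ω => g (X k ω)) (fun ω => g (X l ω)) P :=
      (hindep.indepFun hkl).comp hgmeas hgmeas
    have h0 := hind.integral_mul_eq_mul_integral (hZint k).aestronglyMeasurable (hZint l).aestronglyMeasurable
    rw [hEZ k, hEZ l, mul_zero] at h0
    exact h0
  have hW : ∀ ω, ((empMeasure X n ω) s).toReal - p
      = (n:ℝ)⁻¹ * ∑ k ∈ Finset.Icc 1 n, g (X k ω) := by
    intro ω
    have hn0 : (n:ℝ) ≠ 0 := Nat.cast_ne_zero.mpr (by omega)
    rw [emp_apply X n ω hs, hg]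
    rw [Finset.sum_sub_distrib]
    simp only [Finset.sum_const, Nat.card_Icc, smul_eq_mul]
    have h1 : n + 1 - 1 = n := by omega
    rw [h1]
    field_simp
    rw [nsmul_eq_mul]
  set S : Ω → ℝ := fun ω => ∑ k ∈ Finset.Icc 1 n, g (X k ω) with hS
  set T : Ω → ℝ := fun ω => ∑ k ∈ Finset.Icc 1 n, ∑ l ∈ Finset.Icc 1 n, g (X k ω) * g (X l ω)
    with hT
  have hTint : Integrable T P :=
    integrable_finset_sum _ fun k _ => integrable_finset_sum _ fun l _ => hZZint k l
  have hWsq : ∀ ω, ((n:ℝ)⁻¹ * S ω) ^ 2 = (n:ℝ)⁻¹ ^ 2 * T ω := by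
    intro ω
    rw [mul_pow, sq (S ω), hS]
    simp only []
    rw [Finset.sum_mul_sum]
  have hW2int : Integrable (fun ω => ((n:ℝ)⁻¹ * S ω) ^ 2) P := by
    simp_rw [hWsq]
    exact hTint.const_mul _
  have hWint : Integrable (fun ω => (n:ℝ)⁻¹ * S ω) P :=
    (integrable_finset_sum _ fun k _ => hZint k).const_mul _
  have hTle : ∫ ω, T ω ∂P ≤ n * p := by
    rw [hT]
    simp only []
    rw [integral_finset_sum _ (fun k _ => integrable_finset_sum _ fun l _ => hZZint k l)]
    have hinner : ∀ k ∈ Finset.Icc 1 n,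
        ∫ ω, ∑ l ∈ Finset.Icc 1 n, g (X k ω) * g (X l ω) ∂P ≤ p := by
      intro k hk
      rw [integral_finset_sum _ fun l _ => hZZint k l]
      rw [Finset.sum_eq_single_of_mem k hk (fun l _ hlk => hcross k l (fun h => hlk h.symm))]
      have := hEZ2 k
      simp only [sq] at this
      exact this
    calc ∑ k ∈ Finset.Icc 1 n, ∫ ω, ∑ l ∈ Finset.Icc 1 n, g (X k ω) * g (X l ω) ∂P
        ≤ ∑ _k ∈ Finset.Icc 1 n, p := Finset.sum_le_sum hinner
    _ = n * p := by
        simp only [Finset.sum_const, Nat.card_Icc, smul_eq_mul]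
        have h1 : n + 1 - 1 = n := by omega
        rw [h1, nsmul_eq_mul]
  have hsum2 : ∫ ω, ((n:ℝ)⁻¹ * S ω) ^ 2 ∂P ≤ p / n := by
    have hn0 : (0:ℝ) < n := by exact_mod_cast Nat.pos_of_ne_zero (by omega)
    simp_rw [hWsq]
    calc ∫ ω, (n:ℝ)⁻¹ ^ 2 * T ω ∂P = (n:ℝ)⁻¹ ^ 2 * ∫ ω, T ω ∂P := integral_const_mul _ _
    _ ≤ (n:ℝ)⁻¹ ^ 2 * (n * p) := mul_le_mul_of_nonneg_left hTle (by positivity)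
    _ = p / n := by field_simp
  calc ∫ ω, |((empMeasure X n ω) s).toReal - p| ∂P
      = ∫ ω, |(n:ℝ)⁻¹ * S ω| ∂P := by
        refine integral_congr_ae (ae_of_all _ fun ω => ?_)
        show |((empMeasure X n ω) s).toReal - p| = |(n:ℝ)⁻¹ * S ω|
        rw [hW ω]
  _ ≤ Real.sqrt (∫ ω, ((n:ℝ)⁻¹ * S ω) ^ 2 ∂P) := abs_integral_le_sqrt _ hWint hW2int
  _ ≤ Real.sqrt (p / n) := Real.sqrt_le_sqrt hsum2

lemma emp_toReal_le_one {d : ℕ} (X : ℕ → Ω → EuclideanSpace ℝ (Fin d)) {n : ℕ} (hn : 1 ≤ n)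
    (ω : Ω) (s : Set (EuclideanSpace ℝ (Fin d))) :
    ((empMeasure X n ω) s).toReal ≤ 1 := by
  haveI := emp_isProb X hn ω
  have hle : (empMeasure X n ω) s ≤ 1 := prob_le_one
  calc ((empMeasure X n ω) s).toReal ≤ (1 : ℝ≥0∞).toReal :=
    ENNReal.toReal_mono (by simp) hle
  _ = 1 := by simp

lemma emp_summand_integrable {d : ℕ}
    (X : ℕ → Ω → EuclideanSpace ℝ (Fin d)) (hmeas : ∀ k, Measurable (X k))
    (μ : Measure (EuclideanSpace ℝ (Fin d)))
    {n : ℕ} (hn : 1 ≤ n) {s : Set (EuclideanSpace ℝ (Fin d))} (hs : MeasurableSet s) :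
    Integrable (fun ω => |((empMeasure X n ω) s).toReal - (μ s).toReal|) P := by
  have hempmeas : Measurable (fun ω => ((empMeasure X n ω) s).toReal) := by
    have heq : (fun ω => ((empMeasure X n ω) s).toReal)
        = fun ω => (n:ℝ)⁻¹ * ∑ k ∈ Finset.Icc 1 n, s.indicator (fun _ => (1:ℝ)) (X k ω) :=
      funext fun ω => emp_apply X n ω hs
    rw [heq]
    exact (Finset.measurable_sum _ fun k _ =>
      (measurable_const.indicator hs).comp (hmeas k)).const_mul _
  refine Integrable.mono' (integrable_const (1 + (μ s).toReal))
    ((hempmeas.sub measurable_const).abs).aestronglyMeasurable (ae_of_all _ fun ω => ?_)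
  rw [Real.norm_eq_abs, abs_abs]
  refine (abs_sub _ _).trans ?_
  gcongr
  · rw [abs_of_nonneg ENNReal.toReal_nonneg]
    exact emp_toReal_le_one X hn ω s
  · rw [abs_of_nonneg ENNReal.toReal_nonneg]

lemma exp_Delta {d : ℕ}
    (X : ℕ → Ω → EuclideanSpace ℝ (Fin d)) (hmeas : ∀ k, Measurable (X k))
    (hindep : iIndepFun X P)
    (μ : Measure (EuclideanSpace ℝ (Fin d))) [IsProbabilityMeasure μ]
    (hlaw : ∀ k, Measure.map (X k) P = μ)
    (n : ℕ) (hn : 1 ≤ n) (m : ℕ) :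
    ∫ ω, ∑ j ∈ Jset d m,
        |((empMeasure X n ω) (cell d m j)).toReal - (μ (cell d m j)).toReal| ∂P
      ≤ Real.sqrt ((2:ℝ) ^ (d * m) / n) := by
  have hn0 : (0:ℝ) < n := by exact_mod_cast Nat.pos_of_ne_zero (by omega)
  rw [integral_finset_sum _ (fun j _ =>
    emp_summand_integrable X hmeas μ hn (measurableSet_cell m j))]
  have hterm : ∀ j ∈ Jset d m,
      ∫ ω, |((empMeasure X n ω) (cell d m j)).toReal - (μ (cell d m j)).toReal| ∂P
        ≤ Real.sqrt ((μ (cell d m j)).toReal / n) :=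
    fun j _ => exp_abs_emp_sub_le X hmeas hindep μ hlaw n hn (measurableSet_cell m j)
  have hps : ∀ j, (0:ℝ) ≤ (μ (cell d m j)).toReal := fun j => ENNReal.toReal_nonneg
  have hsum1 : ∑ j ∈ Jset d m, (μ (cell d m j)).toReal = 1 := by
    rw [← ENNReal.toReal_sum (fun j _ => measure_ne_top μ _), sum_cell_eq_one μ m,
      ENNReal.toReal_one]
  have hCS : ∑ j ∈ Jset d m, Real.sqrt ((μ (cell d m j)).toReal)
      ≤ Real.sqrt ((2:ℝ) ^ (d * m)) := by
    rw [Real.le_sqrt (Finset.sum_nonneg fun j _ => Real.sqrt_nonneg _) (by positivity)]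
    have h2 := sq_sum_le_card_mul_sum_sq (s := Jset d m)
      (f := fun j => Real.sqrt ((μ (cell d m j)).toReal))
    have h3 : ∑ j ∈ Jset d m, Real.sqrt ((μ (cell d m j)).toReal) ^ 2 = 1 := by
      rw [← hsum1]
      exact Finset.sum_congr rfl fun j _ => Real.sq_sqrt (hps j)
    rw [h3, mul_one] at h2
    refine h2.trans (le_of_eq ?_)
    rw [card_Jset]
    push_cast
    ring
  calc ∑ j ∈ Jset d m,
      ∫ ω, |((empMeasure X n ω) (cell d m j)).toReal - (μ (cell d m j)).toReal| ∂P
      ≤ ∑ j ∈ Jset d m, Real.sqrt ((μ (cell d m j)).toReal / n) := Finset.sum_le_sum hterm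
  _ = ∑ j ∈ Jset d m, Real.sqrt ((μ (cell d m j)).toReal) / Real.sqrt n := by
      refine Finset.sum_congr rfl fun j _ => ?_
      rw [Real.sqrt_div (hps j)]
  _ = (∑ j ∈ Jset d m, Real.sqrt ((μ (cell d m j)).toReal)) / Real.sqrt n := by
      rw [Finset.sum_div]
  _ ≤ Real.sqrt ((2:ℝ) ^ (d * m)) / Real.sqrt n := by
      gcongr
  _ = Real.sqrt ((2:ℝ) ^ (d * m) / n) := (Real.sqrt_div (by positivity) _).symm

lemma expectation_chain {d : ℕ} {q : ℝ} (hq : 0 < q)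
    (X : ℕ → Ω → EuclideanSpace ℝ (Fin d)) (hmeas : ∀ k, Measurable (X k))
    (hindep : iIndepFun X P)
    (μ : Measure (EuclideanSpace ℝ (Fin d))) [IsProbabilityMeasure μ]
    (hμcube : μ {x : EuclideanSpace ℝ (Fin d) | ∀ i, x i ∈ Set.Icc (0:ℝ) 1} = 1)
    (hlaw : ∀ k, Measure.map (X k) P = μ)
    (n : ℕ) (hn : 1 ≤ n) (M : ℕ) :
    ∫ ω, (⨆ f : HolClassSup d q,
        |∫ x, f.1 x ∂(empMeasure X n ω) - ∫ x, f.1 x ∂μ|) ∂P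
      ≤ 2 * (((2:ℝ) ^ (M+1))⁻¹) ^ q
        + ∑ m ∈ Finset.range M, (((2:ℝ) ^ (m+2))⁻¹) ^ q *
            Real.sqrt ((2:ℝ) ^ (d * (m+1)) / n) := by
  haveI hprob : ∀ ω, IsProbabilityMeasure (empMeasure X n ω) := fun ω => emp_isProb X hn ω
  haveI hNE : Nonempty (HolClassSup d q) :=
    ⟨⟨fun _ => 0, fun x y => by
      simpa using Real.rpow_nonneg (supDist_nonneg x y) q⟩⟩
  have hA1 : ∀ k : ℕ, ∀ᵐ ω ∂P,
      X k ω ∈ {x : EuclideanSpace ℝ (Fin d) | ∀ i, x i ∈ Set.Icc (0:ℝ) 1} := by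
    intro k
    have hprei : P (X k ⁻¹' {x : EuclideanSpace ℝ (Fin d) | ∀ i, x i ∈ Set.Icc (0:ℝ) 1}) = 1 := by
      rw [← Measure.map_apply (hmeas k) measurableSet_unitCube', hlaw k, hμcube]
    rw [ae_iff]
    have heqs : {ω | ¬ X k ω ∈ {x : EuclideanSpace ℝ (Fin d) | ∀ i, x i ∈ Set.Icc (0:ℝ) 1}}
        = (X k ⁻¹' {x : EuclideanSpace ℝ (Fin d) | ∀ i, x i ∈ Set.Icc (0:ℝ) 1})ᶜ := rfl
    rw [heqs, measure_compl ((hmeas k) measurableSet_unitCube') (measure_ne_top _ _), hprei,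
      measure_univ]
    simp
  have hA : ∀ᵐ ω ∂P, ∀ k ∈ Finset.Icc 1 n,
      X k ω ∈ {x : EuclideanSpace ℝ (Fin d) | ∀ i, x i ∈ Set.Icc (0:ℝ) 1} := by
    rw [ae_all_iff]
    exact fun k => (hA1 k).mono fun ω h _ => h
  set B : Ω → ℝ := fun ω => 2 * (((2:ℝ) ^ (M+1))⁻¹) ^ q
      + ∑ m ∈ Finset.range M, (((2:ℝ) ^ (m+2))⁻¹) ^ q *
          ∑ j ∈ Jset d (m+1),
            |((empMeasure X n ω) (cell d (m+1) j)).toReal - (μ (cell d (m+1) j)).toReal|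
    with hB
  have hptwise : ∀ᵐ ω ∂P, (⨆ f : HolClassSup d q,
      |∫ x, f.1 x ∂(empMeasure X n ω) - ∫ x, f.1 x ∂μ|) ≤ B ω := by
    filter_upwards [hA] with ω hω
    have hcube1 : empMeasure X n ω {x : EuclideanSpace ℝ (Fin d) | ∀ i, x i ∈ Set.Icc (0:ℝ) 1} = 1 :=
      emp_cube_eq_one X hn ω hω
    exact ciSup_le fun f => chain_bound hq _ μ hcube1 hμcube f.2 M
  have hΔint : ∀ m : ℕ, Integrable (fun ω => ∑ j ∈ Jset d (m+1),
      |((empMeasure X n ω) (cell d (m+1) j)).toReal - (μ (cell d (m+1) j)).toReal|) P :=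
    fun m => integrable_finset_sum _ fun j _ =>
      emp_summand_integrable X hmeas μ hn (measurableSet_cell (m+1) j)
  have hBint : Integrable B P := by
    rw [hB]
    exact (integrable_const _).add
      (integrable_finset_sum _ fun m _ => ((hΔint m).const_mul _))
  have hBval : ∫ ω, B ω ∂P ≤ 2 * (((2:ℝ) ^ (M+1))⁻¹) ^ q
      + ∑ m ∈ Finset.range M, (((2:ℝ) ^ (m+2))⁻¹) ^ q *
          Real.sqrt ((2:ℝ) ^ (d * (m+1)) / n) := by
    rw [hB]
    rw [integral_add (integrable_const _)
      (integrable_finset_sum _ fun m _ => ((hΔint m).const_mul _)), integral_const]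
    simp only [measure_univ, probReal_univ, ENNReal.toReal_one, smul_eq_mul, one_mul]
    gcongr 2 * _ + ?_
    rw [integral_finset_sum _ fun m _ => ((hΔint m).const_mul _)]
    refine Finset.sum_le_sum fun m _ => ?_
    rw [integral_const_mul]
    have := exp_Delta X hmeas hindep μ hlaw n hn (m+1)
    have hc : (0:ℝ) ≤ (((2:ℝ) ^ (m+2))⁻¹) ^ q := by positivity
    exact mul_le_mul_of_nonneg_left this hc
  by_cases hI : Integrable (fun ω => ⨆ f : HolClassSup d q,
      |∫ x, f.1 x ∂(empMeasure X n ω) - ∫ x, f.1 x ∂μ|) P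
  · exact (integral_mono_ae hI hBint hptwise).trans hBval
  · rw [integral_undef hI]
    have h1 : (0:ℝ) ≤ 2 * (((2:ℝ) ^ (M+1))⁻¹) ^ q := by positivity
    have h2 : (0:ℝ) ≤ ∑ m ∈ Finset.range M, (((2:ℝ) ^ (m+2))⁻¹) ^ q *
        Real.sqrt ((2:ℝ) ^ (d * (m+1)) / n) :=
      Finset.sum_nonneg fun m _ => by positivity
    linarith

end Prob

lemma final_arith (d : ℕ) (hd : 1 ≤ d) {q : ℝ} (hq0 : 0 < q) (hdq : 2 * q < (d:ℝ))
    (n : ℕ) (hn : 1 ≤ n) (I : ℝ)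
    (hI : ∀ M : ℕ, I ≤ 2 * (((2:ℝ) ^ (M+1))⁻¹) ^ q
        + ∑ m ∈ Finset.range M, (((2:ℝ) ^ (m+2))⁻¹) ^ q *
            Real.sqrt ((2:ℝ) ^ (d * (m+1)) / n)) :
    I ≤ 2 * (((d : ℝ) / 2 - q) / (2 * q * (1 - (2 : ℝ) ^ (q - (d : ℝ) / 2)))) ^ (2 * q / d)
        * (1 + q / ((2 : ℝ) ^ q * ((d : ℝ) / 2 - q)))
        * (n : ℝ) ^ (-(q / d)) := by
  have hd0 : (0:ℝ) < d := by exact_mod_cast Nat.pos_of_ne_zero (by omega)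
  have hn0 : (0:ℝ) < n := by exact_mod_cast Nat.pos_of_ne_zero (by omega)
  set s := (d:ℝ)/2 - q with hs
  have hs0 : 0 < s := by rw [hs]; linarith
  set r := (2:ℝ) ^ (q - (d:ℝ)/2) with hrdef
  have hr1 : r < 1 := Real.rpow_lt_one_of_one_lt_of_neg one_lt_two (by linarith)
  have hr0 : (0:ℝ) < r := Real.rpow_pos_of_pos two_pos _
  have hrs : r = (2:ℝ) ^ (-s) := by rw [hrdef, hs]; ring_nf
  have h1r : 0 < 1 - r := by linarith
  set A := s / (2 * q * (1 - r)) with hA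
  have hA0 : 0 < A := div_pos hs0 (by positivity)
  set t := A ^ ((2:ℝ)/d) * (n:ℝ) ^ (-(1:ℝ)/d) with ht
  have ht0 : 0 < t := by positivity
  set M := ⌊Real.logb 2 t⁻¹⌋₊ with hM
  -- first term bound
  have hb1 : ((2:ℝ)^(M+1))⁻¹ ≤ t := by
    have h2p : (0:ℝ) < 2^(M+1) := by positivity
    rcases le_or_gt t⁻¹ 1 with h | h
    · have h1 : 1 ≤ t := by
        have h2 := mul_le_mul_of_nonneg_left h ht0.le
        rw [mul_inv_cancel₀ ht0.ne', mul_one] at h2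
        exact h2
      have h2 : ((2:ℝ)^(M+1))⁻¹ ≤ 1 := inv_le_one_of_one_le₀ (one_le_pow₀ one_le_two)
      linarith
    · have hup : t⁻¹ ≤ 2^(M+1) := by
        have h1 : Real.logb 2 t⁻¹ < (M:ℝ) + 1 := by
          have h2 := Nat.lt_floor_add_one (Real.logb 2 t⁻¹)
          rw [hM]
          exact_mod_cast h2
        calc t⁻¹ = 2 ^ Real.logb 2 t⁻¹ :=
              (Real.rpow_logb two_pos (by norm_num) (inv_pos.mpr ht0)).symm
        _ ≤ 2 ^ ((M:ℝ)+1) := (Real.rpow_le_rpow_left_iff one_lt_two).mpr h1.le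
        _ = 2^(M+1) := by
            rw [show ((M:ℝ)+1) = ((M+1:ℕ):ℝ) by push_cast; ring, Real.rpow_natCast]
      rw [inv_le_comm₀ h2p ht0]
      exact hup
  have htq : t ^ q = A ^ (2*q/d) * (n:ℝ) ^ (-(q/d)) := by
    rw [ht, Real.mul_rpow (by positivity) (by positivity), ← Real.rpow_mul hA0.le,
      ← Real.rpow_mul hn0.le]
    congr 1
    · congr 1; ring
    · congr 1; ring
  have hfirst : 2 * (((2:ℝ)^(M+1))⁻¹) ^ q ≤ 2 * (A ^ (2*q/d) * (n:ℝ) ^ (-(q/d))) := by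
    rw [← htq]
    have := Real.rpow_le_rpow (by positivity) hb1 hq0.le
    linarith
  -- sum bound
  set y := (2:ℝ) ^ s with hy
  have hy1 : 1 < y := Real.one_lt_rpow_iff_of_pos two_pos |>.mpr (Or.inl ⟨one_lt_two, hs0⟩)
  have hy0 : 0 < y := by positivity
  have hry : r = y⁻¹ := by
    rw [hrs, hy]
    exact Real.rpow_neg (by norm_num) s
  have hterm : ∀ m : ℕ, (((2:ℝ)^(m+2))⁻¹) ^ q * Real.sqrt ((2:ℝ) ^ (d * (m+1)) / n)
      = (2:ℝ)^(-q) * (n:ℝ)^(-(1:ℝ)/2) * y ^ (m+1) := by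
    intro m
    have e1 : (((2:ℝ)^(m+2))⁻¹) ^ q = (2:ℝ) ^ (-((((m:ℝ))+2)*q)) := by
      rw [← Real.rpow_natCast 2 (m+2), ← Real.rpow_neg (by norm_num), ← Real.rpow_mul (by norm_num)]
      congr 1
      push_cast
      ring
    have e2 : Real.sqrt ((2:ℝ) ^ (d * (m+1)) / n)
        = (2:ℝ) ^ ((d*((m:ℝ)+1))/2) * (n:ℝ) ^ (-(1:ℝ)/2) := by
      rw [Real.sqrt_div (by positivity) _, Real.sqrt_eq_rpow, Real.sqrt_eq_rpow,
        ← Real.rpow_natCast 2 (d*(m+1)), ← Real.rpow_mul (by norm_num)]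
      rw [div_eq_mul_inv, ← Real.rpow_neg hn0.le]
      congr 2
      · push_cast; ring
      · ring
    rw [e1, e2]
    have e3 : y ^ (m+1) = (2:ℝ) ^ (s * ((m:ℝ)+1)) := by
      rw [hy, ← Real.rpow_natCast ((2:ℝ)^s) (m+1), ← Real.rpow_mul (by norm_num)]
      congr 1
      push_cast
      ring
    rw [e3]
    rw [show (2:ℝ) ^ (-((((m:ℝ))+2)*q)) * ((2:ℝ) ^ ((d*((m:ℝ)+1))/2) * (n:ℝ) ^ (-(1:ℝ)/2))
        = ((2:ℝ) ^ (-((((m:ℝ))+2)*q)) * (2:ℝ) ^ ((d*((m:ℝ)+1))/2)) * (n:ℝ) ^ (-(1:ℝ)/2) from by ring,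
      ← Real.rpow_add two_pos]
    rw [show (2:ℝ)^(-q) * (n:ℝ)^(-(1:ℝ)/2) * (2:ℝ) ^ (s * ((m:ℝ)+1))
        = ((2:ℝ)^(-q) * (2:ℝ) ^ (s * ((m:ℝ)+1))) * (n:ℝ)^(-(1:ℝ)/2) from by ring,
      ← Real.rpow_add two_pos]
    congr 2
    rw [hs]
    ring
  have hgeom : ∑ m ∈ Finset.range M, y ^ (m+1) ≤ y ^ M / (1 - r) := by
    have hsum_eq : ∑ m ∈ Finset.range M, y^(m+1) = (∑ m ∈ Finset.range M, y^m) * y := by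
      rw [Finset.sum_mul]
      exact Finset.sum_congr rfl fun m _ => pow_succ y m
    have h1ry : 1 - r = (y - 1)/y := by
      rw [hry]
      field_simp
    rw [hsum_eq, geom_sum_eq hy1.ne' M, h1ry, div_div_eq_mul_div, div_mul_eq_mul_div]
    gcongr
    · linarith
  have hyM : M ≠ 0 → y ^ M ≤ t ^ (-s) := by
    intro hM1
    have hlognn : 0 ≤ Real.logb 2 t⁻¹ := by
      by_contra hneg
      push_neg at hneg
      have : M = 0 := by rw [hM]; exact Nat.floor_of_nonpos hneg.le
      exact hM1 this
    have hMle : (M:ℝ) ≤ Real.logb 2 t⁻¹ := by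
      rw [hM]
      exact Nat.floor_le hlognn
    have h2M : (2:ℝ)^((M:ℝ)) ≤ t⁻¹ := by
      calc (2:ℝ)^((M:ℝ)) ≤ 2 ^ Real.logb 2 t⁻¹ :=
        (Real.rpow_le_rpow_left_iff one_lt_two).mpr hMle
      _ = t⁻¹ := Real.rpow_logb two_pos (by norm_num) (inv_pos.mpr ht0)
    calc y ^ M = ((2:ℝ)^((M:ℝ))) ^ s := by
          rw [hy, ← Real.rpow_natCast ((2:ℝ)^s) M, ← Real.rpow_mul (by norm_num),
            ← Real.rpow_mul (by norm_num)]
          congr 1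
          ring
    _ ≤ (t⁻¹) ^ s := Real.rpow_le_rpow (by positivity) h2M hs0.le
    _ = t ^ (-s) := by rw [Real.inv_rpow ht0.le, Real.rpow_neg ht0.le]
  have hT2eq : (2:ℝ)^(-q) * (n:ℝ)^(-(1:ℝ)/2) * (t^(-s) / (1 - r))
      = 2 * A ^ (2*q/d) * (q/((2:ℝ)^q * s)) * (n:ℝ) ^ (-(q/d)) := by
    have htns : t ^ (-s) = A ^ ((2:ℝ)/d * (-s)) * (n:ℝ) ^ ((-(1:ℝ)/d) * (-s)) := by
      rw [ht, Real.mul_rpow (by positivity) (by positivity), ← Real.rpow_mul hA0.le,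
        ← Real.rpow_mul hn0.le]
    have hnexp : (n:ℝ)^(-(1:ℝ)/2) * (n:ℝ) ^ ((-(1:ℝ)/d) * (-s)) = (n:ℝ) ^ (-(q/d)) := by
      rw [← Real.rpow_add hn0]
      congr 1
      rw [hs]
      field_simp
      ring
    have hAexp : A ^ (2*q/d) = A ^ ((2:ℝ)/d * (-s)) * A := by
      rw [show A ^ (2*q/d) = A ^ ((2:ℝ)/d * (-s) + 1) from by congr 1; rw [hs]; field_simp; ring,
        Real.rpow_add hA0, Real.rpow_one]
    have hscal : (2:ℝ)^(-q) / (1 - r) = 2 * (q/((2:ℝ)^q * s)) * A := by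
      rw [hA, Real.rpow_neg (by norm_num)]
      have h2q : (0:ℝ) < (2:ℝ)^q := Real.rpow_pos_of_pos two_pos q
      field_simp
    rw [htns, hAexp]
    rw [show (2:ℝ)^(-q) * (n:ℝ)^(-(1:ℝ)/2) * (A ^ ((2:ℝ)/d * (-s)) * (n:ℝ) ^ ((-(1:ℝ)/d) * (-s)) / (1 - r))
        = ((2:ℝ)^(-q) / (1-r)) * A ^ ((2:ℝ)/d * (-s)) * ((n:ℝ)^(-(1:ℝ)/2) * (n:ℝ) ^ ((-(1:ℝ)/d) * (-s)))
        from by ring, hnexp, hscal]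
    ring
  -- combine
  refine (hI M).trans ?_
  have hsumle : ∑ m ∈ Finset.range M, (((2:ℝ)^(m+2))⁻¹) ^ q *
      Real.sqrt ((2:ℝ) ^ (d * (m+1)) / n)
      ≤ 2 * A ^ (2*q/d) * (q/((2:ℝ)^q * s)) * (n:ℝ) ^ (-(q/d)) := by
    rcases Nat.eq_zero_or_pos M with hM0 | hM1
    · rw [hM0]
      simp only [Finset.range_zero, Finset.sum_empty]
      positivity
    · calc ∑ m ∈ Finset.range M, (((2:ℝ)^(m+2))⁻¹) ^ q * Real.sqrt ((2:ℝ) ^ (d * (m+1)) / n)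
          = (2:ℝ)^(-q) * (n:ℝ)^(-(1:ℝ)/2) * ∑ m ∈ Finset.range M, y ^ (m+1) := by
            rw [Finset.mul_sum]
            exact Finset.sum_congr rfl fun m _ => hterm m
      _ ≤ (2:ℝ)^(-q) * (n:ℝ)^(-(1:ℝ)/2) * (y ^ M / (1 - r)) := by
            refine mul_le_mul_of_nonneg_left hgeom (by positivity)
      _ ≤ (2:ℝ)^(-q) * (n:ℝ)^(-(1:ℝ)/2) * (t ^ (-s) / (1 - r)) := by
            refine mul_le_mul_of_nonneg_left ?_ (by positivity)
            have h5 := hyM (by omega)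
            gcongr
      _ = 2 * A ^ (2*q/d) * (q/((2:ℝ)^q * s)) * (n:ℝ) ^ (-(q/d)) := hT2eq
  calc 2 * (((2:ℝ)^(M+1))⁻¹) ^ q + ∑ m ∈ Finset.range M, (((2:ℝ)^(m+2))⁻¹) ^ q *
      Real.sqrt ((2:ℝ) ^ (d * (m+1)) / n)
      ≤ 2 * (A ^ (2*q/d) * (n:ℝ) ^ (-(q/d)))
        + 2 * A ^ (2*q/d) * (q/((2:ℝ)^q * s)) * (n:ℝ) ^ (-(q/d)) := add_le_add hfirst hsumle
  _ = 2 * A ^ (2*q/d) * (1 + q/((2:ℝ)^q * s)) * (n:ℝ) ^ (-(q/d)) := by ring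


end WqinfProof

/-- large dimension. If `d > 2q`, `μ` is a probability measure on `[0,1]^d`
and `(X_k)` are i.i.d. of law `μ`, then for every `n ≥ 1`,
`E[W_{q,∞}(μ̂_n, μ)] ≤ 2((d/2−q)/(2q(1−2^{q−d/2})))^{2q/d} (1 + q/(2^q(d/2−q))) n^{−q/d}`. -/
theorem empirical_Wqinf_large_dim
    {Ω : Type*} [MeasurableSpace Ω] (P : Measure Ω) [IsProbabilityMeasure P]
    (d : ℕ) (hd : 1 ≤ d) (q : ℝ) (hq : q ∈ Set.Ioc (0:ℝ) 1) (hdq : 2 * q < (d : ℝ))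
    (μ : Measure (EuclideanSpace ℝ (Fin d))) [IsProbabilityMeasure μ]
    (hμ : μ (unitCube d) = 1)
    (X : ℕ → Ω → EuclideanSpace ℝ (Fin d)) (hmeas : ∀ k, Measurable (X k))
    (hindep : iIndepFun X P)
    (hlaw : ∀ k, Measure.map (X k) P = μ)
    (n : ℕ) (hn : 1 ≤ n) :
    ∫ ω, Wqinf q (empMeasure X n ω) μ ∂P
      ≤ 2 * (((d : ℝ) / 2 - q) / (2 * q * (1 - (2 : ℝ) ^ (q - (d : ℝ) / 2)))) ^ (2 * q / d)
          * (1 + q / ((2 : ℝ) ^ q * ((d : ℝ) / 2 - q)))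
          * (n : ℝ) ^ (-(q / d)) := by
  have hμ' : μ {x : EuclideanSpace ℝ (Fin d) | ∀ i, x i ∈ Set.Icc (0:ℝ) 1} = 1 := hμ
  have hkey : ∀ M : ℕ, (∫ ω, Wqinf q (empMeasure X n ω) μ ∂P)
      ≤ 2 * (((2:ℝ) ^ (M+1))⁻¹) ^ q
        + ∑ m ∈ Finset.range M, (((2:ℝ) ^ (m+2))⁻¹) ^ q *
            Real.sqrt ((2:ℝ) ^ (d * (m+1)) / n) := fun M =>
    WqinfProof.expectation_chain hq.1 X hmeas hindep μ hμ' hlaw n hn M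
  exact WqinfProof.final_arith d hd hq.1 hdq n hn _ hkey

end
end
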